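/- arXiv:1902.06452 — 4 statements merged into one kernel-verified Lean document; each statement's English description precedes it below -/
import Mathlib

section
/- Let s₀ > 1/2. There exists C = C(s₀) > 0 such that for all sufficiently smooth real-valued u, v on 𝕋: |∫ ∂_x(v · H∂_x u) · u dx| ≤ C‖v‖_{H^{s₀+2}}‖u‖_{L²}², where H is the Hilbert transform. -/
open MeasureTheory Real Complex AddCircle
open scoped BigOperators ENNReal

noncomputable section

instance : Fact (0 < 2 * Real.pi) := ⟨by positivity⟩

/-- The torus `ℝ/2πℤ`. -/
abbrev Torus := AddCircle (2 * Real.pi)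

/-- Fourier coefficient of a real-valued function on the torus
(with respect to the normalized Haar measure). -/
def FC (f : Torus → ℝ) (n : ℤ) : ℂ :=
  fourierCoeff (fun x => (f x : ℂ)) n

/-- Inhomogeneous Sobolev `H^s` norm, via Fourier coefficients:
`‖f‖_{H^s} = ( ∑ ⟨n⟩^{2s} |f̂(n)|² )^{1/2}`. -/
def HsNorm (s : ℝ) (f : Torus → ℝ) : ℝ :=
  Real.sqrt (∑' n : ℤ, ((1 + (n : ℝ) ^ 2) ^ s) * ‖FC f n‖ ^ 2)

/-- Homogeneous Sobolev norm `‖D^s f‖_{L²} = ( ∑ |n|^{2s} |f̂(n)|² )^{1/2}`,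
where `D = 𝓕⁻¹ |ξ| 𝓕`. -/
def DsNorm (s : ℝ) (f : Torus → ℝ) : ℝ :=
  Real.sqrt (∑' n : ℤ, (|(n : ℝ)| ^ (2 * s)) * ‖FC f n‖ ^ 2)

/-- Membership in `H^s(𝕋)` (finiteness of the Sobolev sum). -/
def MemHs (s : ℝ) (f : Torus → ℝ) : Prop :=
  Summable (fun n : ℤ => ((1 + (n : ℝ) ^ 2) ^ s) * ‖FC f n‖ ^ 2)

/-- `g` is the image of `f` under the Fourier multiplier with symbol `m`. -/
def HasSymbol (m : ℤ → ℂ) (f g : Torus → ℝ) : Prop :=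
  ∀ n : ℤ, FC g n = m n * FC f n

/-- Symbol of the Hilbert transform `H`: `-i sgn(n)`. -/
def symH (n : ℤ) : ℂ := -Complex.I * (Int.sign n : ℂ)

/-- Symbol of `D^s = 𝓕⁻¹|ξ|^s𝓕`. -/
def symD (s : ℝ) (n : ℤ) : ℂ := ((|(n : ℝ)| ^ s : ℝ) : ℂ)

/-- Symbol of `∂ₓ`. -/
def symDx (n : ℤ) : ℂ := Complex.I * (n : ℂ)

/-- Symbol of the smoothed antiderivative `J`: `ψ(ξ)/|ξ|`. -/
def symJ (ψ : ℝ → ℝ) (n : ℤ) : ℂ := ((ψ n / |(n : ℝ)| : ℝ) : ℂ)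

/-- `ψ` is a smooth cutoff: `0 ≤ ψ ≤ 1`, `ψ = 1` on `|ξ| ≥ 2`, `ψ = 0` on `|ξ| ≤ 1`. -/
def IsCutoff (ψ : ℝ → ℝ) : Prop :=
  ContDiff ℝ (⊤ : ℕ∞) ψ ∧ (∀ x, 0 ≤ ψ x) ∧ (∀ x, ψ x ≤ 1) ∧
    (∀ x, 2 ≤ |x| → ψ x = 1) ∧ (∀ x, |x| ≤ 1 → ψ x = 0)

/-- Rapid decay of Fourier coefficients (a model for "sufficiently smooth"). -/
def SmoothFC (f : Torus → ℝ) : Prop :=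
  ∀ k : ℕ, Summable (fun n : ℤ => |(n : ℝ)| ^ k * ‖FC f n‖)

/-- `L²` pairing `⟨f, g⟩ = ∫ f g`. -/
def inn (f g : Torus → ℝ) : ℝ := ∫ x : Torus, f x * g x ∂haarAddCircle

/-- Trilinear integral `∫ f g h`. -/
def inn3 (f g h : Torus → ℝ) : ℝ := ∫ x : Torus, f x * g x * h x ∂haarAddCircle

/-- Quadrilinear integral `∫ f g h k`. -/
def inn4 (f g h k : Torus → ℝ) : ℝ :=
  ∫ x : Torus, f x * g x * h x * k x ∂haarAddCircle



namespace Stmt9Aux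

lemma cont_integrable {f : Torus → ℂ} (hf : Continuous f) :
    Integrable f (haarAddCircle (T := 2 * Real.pi)) :=
  hf.integrable_of_hasCompactSupport (HasCompactSupport.of_compactSpace f)

def intCLM (g : C(Torus, ℂ)) : C(Torus, ℂ) →L[ℂ] ℂ :=
  LinearMap.mkContinuous
    { toFun := fun F => ∫ x : Torus, F x * g x ∂haarAddCircle
      map_add' := fun F G => by
        simp only [ContinuousMap.add_apply, add_mul]
        exact integral_add (cont_integrable (F.continuous.mul g.continuous))
          (cont_integrable (G.continuous.mul g.continuous))
      map_smul' := fun c F => by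
        simp only [ContinuousMap.smul_apply, smul_eq_mul, mul_assoc, RingHom.id_apply]
        exact integral_const_mul c _ }
    ‖g‖
    (fun F => by
      have h : ‖∫ x : Torus, F x * g x ∂haarAddCircle‖ ≤ ‖F‖ * ‖g‖ := by
        refine le_trans (norm_integral_le_of_norm_le_const (C := ‖F‖ * ‖g‖) ?_) ?_
        · refine Filter.Eventually.of_forall fun x => ?_
          rw [norm_mul]
          exact mul_le_mul (F.norm_coe_le_norm x) (g.norm_coe_le_norm x)
            (norm_nonneg _) (norm_nonneg _)
        · simp
      simpa [mul_comm] using h)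

lemma intCLM_apply (g F : C(Torus, ℂ)) :
    intCLM g F = ∫ x : Torus, F x * g x ∂haarAddCircle := rfl

lemma expand {f : Torus → ℝ} (hf : Continuous f) (hf1 : Summable fun n => ‖FC f n‖)
    (g : C(Torus, ℂ)) :
    HasSum (fun n : ℤ => FC f n * ∫ x : Torus, fourier n x * g x ∂haarAddCircle)
      (∫ x : Torus, (f x : ℂ) * g x ∂haarAddCircle) := by
  let F : C(Torus, ℂ) := ⟨fun x => (f x : ℂ), Complex.continuous_ofReal.comp hf⟩
  have hFC : ∀ n, fourierCoeff (⇑F) n = FC f n := fun n => rfl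
  have hsum : Summable (fourierCoeff (⇑F)) := by
    refine Summable.of_norm ?_
    simpa only [hFC] using hf1
  have H := (intCLM g).hasSum (hasSum_fourier_series_of_summable hsum)
  have e1 : ∀ n : ℤ, intCLM g (fourierCoeff (⇑F) n • fourier n)
      = FC f n * ∫ x : Torus, fourier n x * g x ∂haarAddCircle := by
    intro n
    rw [(intCLM g).map_smul, smul_eq_mul, hFC]
    rfl
  have e2 : intCLM g F = ∫ x : Torus, (f x : ℂ) * g x ∂haarAddCircle := rfl
  simpa only [e1, e2] using H

lemma fcmul {v Hu1 : Torus → ℝ} (hv : Continuous v)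
    (hv1 : Summable fun n => ‖FC v n‖) (hH : Continuous Hu1) (k : ℤ) :
    HasSum (fun m : ℤ => FC v m * FC Hu1 (k - m)) (FC (fun x => v x * Hu1 x) k) := by
  let g : C(Torus, ℂ) := ⟨fun x => fourier (-k) x * (Hu1 x : ℂ),
    (map_continuous (fourier (-k))).mul (Complex.continuous_ofReal.comp hH)⟩
  have H := expand hv hv1 g
  have e1 : (fun m : ℤ => FC v m * ∫ x : Torus, fourier m x * g x ∂haarAddCircle)
      = fun m : ℤ => FC v m * FC Hu1 (k - m) := by
    funext m
    congr 1
    show ∫ x : Torus, fourier m x * (fourier (-k) x * (Hu1 x : ℂ)) ∂haarAddCircle = _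
    have e : FC Hu1 (k - m)
        = ∫ x : Torus, fourier (-(k - m)) x • ((Hu1 x : ℝ) : ℂ) ∂haarAddCircle := rfl
    rw [e]
    congr 1
    funext x
    rw [smul_eq_mul, ← mul_assoc, ← fourier_add]
    have hidx : m + -k = -(k - m) := by ring
    rw [hidx]
  have e2 : (∫ x : Torus, (v x : ℂ) * g x ∂haarAddCircle)
      = FC (fun x => v x * Hu1 x) k := by
    rw [FC, fourierCoeff]
    congr 1
    funext x
    show (v x : ℂ) * (fourier (-k) x * (Hu1 x : ℂ)) = fourier (-k) x • ((v x * Hu1 x : ℝ) : ℂ)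
    rw [smul_eq_mul]
    push_cast
    ring
  rw [e1, e2] at H
  exact H

lemma symHDx (j : ℤ) : symH j * symDx j = ((|(j : ℝ)| : ℝ) : ℂ) := by
  have h1 : (Int.sign j * j : ℤ) = |j| := by
    rcases lt_trichotomy j 0 with h | h | h
    · rw [Int.sign_eq_neg_one_iff_neg.mpr h, abs_of_neg h]; ring
    · simp [h]
    · rw [Int.sign_eq_one_iff_pos.mpr h, abs_of_pos h]; ring
  calc symH j * symDx j = -Complex.I * Complex.I * ((Int.sign j : ℂ) * (j : ℂ)) := by
        unfold symH symDx; ring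
    _ = (Int.sign j : ℂ) * (j : ℂ) := by rw [neg_mul, Complex.I_mul_I]; ring
    _ = ((Int.sign j * j : ℤ) : ℂ) := by push_cast; ring
    _ = ((|j| : ℤ) : ℂ) := by rw [h1]
    _ = ((|(j : ℝ)| : ℝ) : ℂ) := by rw [← Int.cast_abs]; norm_cast

lemma key_ineq (x y : ℝ) :
    _root_.abs (x * _root_.abs y + y * _root_.abs x) ≤ 2 * (x + y) ^ 2 := by
  rcases le_or_gt 0 x with hx | hx <;> rcases le_or_gt 0 y with hy | hy
  · rw [_root_.abs_of_nonneg hy, _root_.abs_of_nonneg hx]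
    exact _root_.abs_le.2 ⟨by nlinarith, by nlinarith⟩
  · rw [_root_.abs_of_neg hy, _root_.abs_of_nonneg hx]
    exact _root_.abs_le.2 ⟨by nlinarith, by nlinarith⟩
  · rw [_root_.abs_of_nonneg hy, _root_.abs_of_neg hx]
    exact _root_.abs_le.2 ⟨by nlinarith, by nlinarith⟩
  · rw [_root_.abs_of_neg hy, _root_.abs_of_neg hx]
    exact _root_.abs_le.2 ⟨by nlinarith, by nlinarith⟩

lemma tsum_CS {b c : ℤ → ℝ} (hb : ∀ n, 0 ≤ b n) (hc : ∀ n, 0 ≤ c n)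
    (hb2 : Summable (fun n => b n ^ 2)) (hc2 : Summable (fun n => c n ^ 2)) :
    ∑' n, b n * c n ≤ Real.sqrt (∑' n, b n ^ 2) * Real.sqrt (∑' n, c n ^ 2) := by
  have hbc : Summable (fun n => b n * c n) := by
    refine Summable.of_nonneg_of_le (fun n => mul_nonneg (hb n) (hc n)) (fun n => ?_)
      ((hb2.add hc2).div_const 2)
    nlinarith [sq_nonneg (b n - c n)]
  refine Summable.tsum_le_of_sum_le hbc fun s => ?_
  have h1 : (∑ i ∈ s, b i * c i) ^ 2 ≤ (∑ i ∈ s, b i ^ 2) * ∑ i ∈ s, c i ^ 2 :=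
    Finset.sum_mul_sq_le_sq_mul_sq s b c
  have h2 : ∑ i ∈ s, b i ^ 2 ≤ ∑' n, b n ^ 2 := Summable.sum_le_tsum s (fun i _ => sq_nonneg _) hb2
  have h3 : ∑ i ∈ s, c i ^ 2 ≤ ∑' n, c n ^ 2 := Summable.sum_le_tsum s (fun i _ => sq_nonneg _) hc2
  have h4 : (0 : ℝ) ≤ ∑ i ∈ s, b i * c i :=
    Finset.sum_nonneg fun i _ => mul_nonneg (hb i) (hc i)
  have h5 : (0 : ℝ) ≤ ∑ i ∈ s, b i ^ 2 := Finset.sum_nonneg fun i _ => sq_nonneg _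
  have h6 : (0 : ℝ) ≤ ∑ i ∈ s, c i ^ 2 := Finset.sum_nonneg fun i _ => sq_nonneg _
  have hsb := Real.sq_sqrt (tsum_nonneg (fun n => sq_nonneg (b n)) : (0:ℝ) ≤ ∑' n, b n ^ 2)
  have hsc := Real.sq_sqrt (tsum_nonneg (fun n => sq_nonneg (c n)) : (0:ℝ) ≤ ∑' n, c n ^ 2)
  have hsbn := Real.sqrt_nonneg (∑' n, b n ^ 2)
  have hscn := Real.sqrt_nonneg (∑' n, c n ^ 2)
  have h7 : (∑ i ∈ s, b i * c i) ^ 2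
      ≤ (Real.sqrt (∑' n, b n ^ 2) * Real.sqrt (∑' n, c n ^ 2)) ^ 2 := by
    rw [mul_pow, hsb, hsc]
    exact h1.trans (mul_le_mul h2 h3 h6 (le_trans h5 h2))
  nlinarith [h7, h4, mul_nonneg hsbn hscn]


/-- auxiliary kernel function -/
def Pfun (u v : Torus → ℝ) (p : ℤ × ℤ) : ℂ :=
  FC u p.1 * (Complex.I * ((-p.1 : ℤ) : ℂ)) *
    (FC v (-p.1 - p.2) * ((((|((p.2 : ℝ))| : ℝ)) : ℂ) * FC u p.2))

-- summability of the negative-power weight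
lemma sum_neg_weight {s₀ : ℝ} (hs₀ : 1 / 2 < s₀) :
    Summable (fun m : ℤ => (1 + (m : ℝ) ^ 2) ^ (-s₀)) := by
  have h1 : Summable (fun m : ℤ => |(m : ℝ)| ^ (-(2 * s₀))) :=
    Real.summable_abs_int_rpow (by linarith)
  have h2 : Summable (fun m : ℤ => if m = 0 then (1 : ℝ) else 0) := by
    refine summable_of_ne_finset_zero (s := {0}) ?_
    intro b hb
    simp only [Finset.mem_singleton] at hb
    simp [hb]
  refine Summable.of_nonneg_of_le
    (fun m => Real.rpow_nonneg (by positivity) _) (fun m => ?_) (h1.add h2)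
  by_cases hm : m = 0
  · subst hm
    simp [Real.one_rpow, Real.zero_rpow (by linarith : -(2 * s₀) ≠ 0)]
  · have hm' : ((m : ℝ)) ≠ 0 := by exact_mod_cast hm
    have hpos : (0 : ℝ) < (m : ℝ) ^ 2 := by positivity
    have hle : (1 + (m : ℝ) ^ 2) ^ (-s₀) ≤ ((m : ℝ) ^ 2) ^ (-s₀) :=
      Real.rpow_le_rpow_of_nonpos hpos (by linarith) (by linarith)
    have heq : ((m : ℝ) ^ 2) ^ (-s₀) = |(m : ℝ)| ^ (-(2 * s₀)) := by
      rw [← _root_.sq_abs, ← Real.rpow_natCast (|(m : ℝ)|) 2, ← Real.rpow_mul (abs_nonneg _)]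
      norm_num
    simp only [hm, if_false, add_zero]
    rw [← heq]
    exact hle

lemma rpow_sq {x : ℝ} (hx : 0 < x) (t : ℝ) : (x ^ t) ^ 2 = x ^ (2 * t) := by
  rw [← Real.rpow_natCast (x ^ t) 2, ← Real.rpow_mul hx.le]
  norm_num [mul_comm]

lemma pow_one_add_le (x : ℝ) (hx : 0 ≤ x) (K : ℕ) : (1 + x) ^ K ≤ 2 ^ K * (1 + x ^ K) := by
  rcases le_total x 1 with h | h
  · have h1 : (1 + x) ^ K ≤ 2 ^ K := pow_le_pow_left₀ (by positivity) (by linarith) K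
    nlinarith [pow_nonneg hx K, pow_pos (show (0:ℝ) < 2 by norm_num) K]
  · have h1 : (1 + x) ^ K ≤ (2 * x) ^ K := pow_le_pow_left₀ (by positivity) (by linarith) K
    rw [mul_pow] at h1
    nlinarith [pow_pos (show (0:ℝ) < 2 by norm_num) K, pow_nonneg hx K]




end Stmt9Aux

open Stmt9Aux

set_option maxHeartbeats 1000000

/-- `|⟨∂ₓ(v H∂ₓu), u⟩| ≤ C‖v‖_{H^{s₀+2}}‖u‖_{L²}²`. -/
theorem statement9 (s₀ : ℝ) (hs₀ : 1 / 2 < s₀) :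
    ∃ C > (0 : ℝ), ∀ u v Hu1 d : Torus → ℝ,
      Continuous u → SmoothFC u →
      Continuous v → SmoothFC v →
      Continuous Hu1 → HasSymbol (fun n => symH n * symDx n) u Hu1 →
      Continuous d → HasSymbol symDx (fun x => v x * Hu1 x) d →
      |inn d u| ≤ C * HsNorm (s₀ + 2) v * HsNorm 0 u ^ 2 := by
  classical
  set C₀ : ℝ := Real.sqrt (∑' m : ℤ, (1 + (m : ℝ) ^ 2) ^ (-s₀)) with hC₀def
  have hC₀nn : 0 ≤ C₀ := Real.sqrt_nonneg _
  refine ⟨C₀ + 1, by linarith, ?_⟩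
  intro u v Hu1 d hu hu_s hv hv_s hH1c hH1 hdc hd
  set K : ℕ := ⌈s₀⌉₊ + 2 with hKdef
  have hKle : s₀ + 2 ≤ (K : ℝ) := by
    have := Nat.le_ceil s₀
    push_cast [hKdef]
    linarith
  -- basic summability
  have h_u0 : Summable fun n : ℤ => ‖FC u n‖ := by simpa using hu_s 0
  have h_u1 : Summable fun n : ℤ => |(n : ℝ)| * ‖FC u n‖ := by simpa using hu_s 1
  have h_v0 : Summable fun n : ℤ => ‖FC v n‖ := by simpa using hv_s 0
  have h_v2 : Summable fun n : ℤ => ((n : ℝ)) ^ 2 * ‖FC v n‖ := by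
    have := hv_s 2
    refine this.congr fun n => ?_
    rw [_root_.sq_abs]
  have h_v2K : Summable fun n : ℤ => |(n : ℝ)| ^ (2 * K) * ‖FC v n‖ := hv_s (2 * K)
  set Bv : ℝ := ∑' n : ℤ, ‖FC v n‖ with hBvdef
  have hBv : ∀ m : ℤ, ‖FC v m‖ ≤ Bv := fun m =>
    Summable.le_tsum h_v0 m fun _ _ => norm_nonneg _
  -- Fourier coefficients of Hu1
  have hHu : ∀ j : ℤ, FC Hu1 j = ((|(j : ℝ)| : ℝ) : ℂ) * FC u j := fun j => by
    rw [hH1 j]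
    simp only [symHDx j]
  -- convolution expansion of FC (v * Hu1)
  have hconv : ∀ n : ℤ,
      HasSum (fun k : ℤ => FC v (-n - k) * ((((|((k : ℝ))| : ℝ)) : ℂ) * FC u k))
        (FC (fun x => v x * Hu1 x) (-n)) := by
    intro n
    have h0 := fcmul hv h_v0 hH1c (-n)
    simp only [hHu] at h0
    have h1 := (Equiv.subLeft (-n)).hasSum_iff.mpr h0
    simp only [Function.comp_def, Equiv.subLeft_apply, sub_sub_cancel] at h1
    exact h1
  -- the double-indexed expansion
  have hFCd : ∀ n : ℤ, FC u n * FC d (-n) = ∑' k : ℤ, Pfun u v (n, k) := by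
    intro n
    rw [hd (-n), ← (hconv n).tsum_eq, ← mul_assoc, ← tsum_mul_left]
    refine tsum_congr fun k => ?_
    simp only [Pfun, symDx]
  -- summability of Pfun
  have hprod : Summable (fun p : ℤ × ℤ =>
      (|(p.1 : ℝ)| * ‖FC u p.1‖) * (|(p.2 : ℝ)| * ‖FC u p.2‖)) :=
    h_u1.mul_of_nonneg h_u1 (fun n => by positivity) (fun n => by positivity)
  have hPbound : ∀ p : ℤ × ℤ, ‖Pfun u v p‖
      ≤ Bv * ((|(p.1 : ℝ)| * ‖FC u p.1‖) * (|(p.2 : ℝ)| * ‖FC u p.2‖)) := by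
    rintro ⟨n, k⟩
    have he : ‖Pfun u v (n, k)‖
        = ‖FC u n‖ * |(n : ℝ)| * (‖FC v (-n - k)‖ * (|(k : ℝ)| * ‖FC u k‖)) := by
      simp [Pfun, norm_mul, Complex.norm_real, Real.norm_eq_abs, abs_abs]
    rw [he]
    have h1 : ‖FC v (-n - k)‖ * (|(k : ℝ)| * ‖FC u k‖)
        ≤ Bv * (|(k : ℝ)| * ‖FC u k‖) :=
      mul_le_mul_of_nonneg_right (hBv _) (by positivity)
    nlinarith [norm_nonneg (FC u n), abs_nonneg ((n : ℝ)), norm_nonneg (FC u k),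
      abs_nonneg ((k : ℝ)), mul_nonneg (norm_nonneg (FC u n)) (abs_nonneg ((n : ℝ))),
      mul_le_mul_of_nonneg_left h1 (mul_nonneg (norm_nonneg (FC u n)) (abs_nonneg ((n : ℝ))))]
  have hPnorm : Summable (fun p : ℤ × ℤ => ‖Pfun u v p‖) :=
    Summable.of_nonneg_of_le (fun p => norm_nonneg _) hPbound (hprod.mul_left Bv)
  have hPsum : Summable (Pfun u v) := hPnorm.of_norm
  -- the pairing as a double sum
  have hZ : HasSum (fun n : ℤ => FC u n * FC d (-n)) ((inn d u : ℝ) : ℂ) := by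
    have H := expand hu h_u0 ⟨fun x => ((d x : ℝ) : ℂ), Complex.continuous_ofReal.comp hdc⟩
    simp only [ContinuousMap.coe_mk] at H
    have e1 : ∀ n : ℤ,
        (∫ x : Torus, fourier n x * ((d x : ℝ) : ℂ) ∂haarAddCircle) = FC d (-n) := by
      intro n
      rw [FC, fourierCoeff, neg_neg]
      congr 1
    have e2 : (∫ x : Torus, (u x : ℂ) * ((d x : ℝ) : ℂ) ∂haarAddCircle)
        = ((inn d u : ℝ) : ℂ) := by
      rw [inn]
      rw [show (fun x : Torus => (u x : ℂ) * ((d x : ℝ) : ℂ))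
          = fun x : Torus => ((d x * u x : ℝ) : ℂ) from funext fun x => by push_cast; ring]
      exact integral_ofReal
    simp only [e1, e2] at H
    exact H
  have hZt : ((inn d u : ℝ) : ℂ) = ∑' p : ℤ × ℤ, Pfun u v p := by
    rw [← hZ.tsum_eq, tsum_congr hFCd]
    exact (Summable.tsum_prod' hPsum hPsum.prod_factor).symm
  -- symmetrization
  have hPswapnorm : Summable (fun p : ℤ × ℤ => ‖Pfun u v p.swap‖) := by
    have := (Equiv.prodComm ℤ ℤ).summable_iff.mpr hPnorm
    simpa [Function.comp_def] using this
  have hPswap : Summable (fun p : ℤ × ℤ => Pfun u v p.swap) := hPswapnorm.of_norm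
  have hQnorm : Summable (fun p : ℤ × ℤ => ‖Pfun u v p + Pfun u v p.swap‖) :=
    Summable.of_nonneg_of_le (fun _ => norm_nonneg _) (fun p => norm_add_le _ _)
      (hPnorm.add hPswapnorm)
  have htsumswap : ∑' p : ℤ × ℤ, Pfun u v p.swap = ∑' p : ℤ × ℤ, Pfun u v p := by
    simpa [Function.comp] using (Equiv.prodComm ℤ ℤ).tsum_eq (Pfun u v)
  have hQt : ∑' p : ℤ × ℤ, (Pfun u v p + Pfun u v p.swap)
      = ((inn d u : ℝ) : ℂ) + ((inn d u : ℝ) : ℂ) := by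
    rw [Summable.tsum_add hPsum hPswap, htsumswap, ← hZt]
  have h2n : 2 * |inn d u| ≤ ∑' p : ℤ × ℤ, ‖Pfun u v p + Pfun u v p.swap‖ := by
    have h := norm_tsum_le_tsum_norm hQnorm
    rw [hQt] at h
    have he : ‖((inn d u : ℝ) : ℂ) + ((inn d u : ℝ) : ℂ)‖ = 2 * |inn d u| := by
      rw [← two_mul, norm_mul]
      simp [Complex.norm_real, Real.norm_eq_abs]
    rw [he] at h
    exact h
  -- pointwise bound after symmetrization
  have hQb : ∀ p : ℤ × ℤ, ‖Pfun u v p + Pfun u v p.swap‖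
      ≤ ‖FC u p.1‖ ^ 2 * (((p.1 : ℝ) + (p.2 : ℝ)) ^ 2 * ‖FC v (-(p.1 + p.2))‖)
        + ‖FC u p.2‖ ^ 2 * (((p.1 : ℝ) + (p.2 : ℝ)) ^ 2 * ‖FC v (-(p.1 + p.2))‖) := by
    rintro ⟨n, k⟩
    have hidx : (-k - n : ℤ) = -n - k := by ring
    have hidx2 : (-(n + k) : ℤ) = -n - k := by ring
    have hPP : Pfun u v (n, k) + Pfun u v (k, n)
        = (-Complex.I) * ((((n : ℝ) * |(k : ℝ)| + (k : ℝ) * |(n : ℝ)| : ℝ)) : ℂ)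
          * (FC v (-n - k) * (FC u n * FC u k)) := by
      simp only [Pfun, hidx]
      push_cast
      ring
    have hnorm : ‖Pfun u v (n, k) + Pfun u v (k, n)‖
        = _root_.abs ((n : ℝ) * |(k : ℝ)| + (k : ℝ) * |(n : ℝ)|)
          * (‖FC v (-n - k)‖ * (‖FC u n‖ * ‖FC u k‖)) := by
      rw [hPP, norm_mul, norm_mul, norm_neg, Complex.norm_I, one_mul,
        Complex.norm_real, Real.norm_eq_abs, norm_mul, norm_mul]
    show ‖Pfun u v (n, k) + Pfun u v (k, n)‖ ≤ _
    rw [hnorm]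
    have hki := key_ineq (n : ℝ) (k : ℝ)
    have hwnn : (0 : ℝ) ≤ ‖FC v (-n - k)‖ * (‖FC u n‖ * ‖FC u k‖) := by positivity
    have step1 : _root_.abs ((n : ℝ) * |(k : ℝ)| + (k : ℝ) * |(n : ℝ)|)
          * (‖FC v (-n - k)‖ * (‖FC u n‖ * ‖FC u k‖))
        ≤ (2 * ((n : ℝ) + (k : ℝ)) ^ 2) * (‖FC v (-n - k)‖ * (‖FC u n‖ * ‖FC u k‖)) :=
      mul_le_mul_of_nonneg_right hki hwnn
    refine step1.trans ?_
    show _ ≤ ‖FC u n‖ ^ 2 * (((n : ℝ) + (k : ℝ)) ^ 2 * ‖FC v (-(n + k))‖)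
        + ‖FC u k‖ ^ 2 * (((n : ℝ) + (k : ℝ)) ^ 2 * ‖FC v (-(n + k))‖)
    rw [hidx2]
    have hamgm : 2 * (‖FC u n‖ * ‖FC u k‖) ≤ ‖FC u n‖ ^ 2 + ‖FC u k‖ ^ 2 := by
      nlinarith [sq_nonneg (‖FC u n‖ - ‖FC u k‖)]
    have hcnn : (0 : ℝ) ≤ ((n : ℝ) + (k : ℝ)) ^ 2 * ‖FC v (-n - k)‖ := by positivity
    nlinarith [mul_le_mul_of_nonneg_left hamgm hcnn]
  -- summability and value of the majorant sums
  have sum_a2 : Summable (fun n : ℤ => ‖FC u n‖ ^ 2) := by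
    refine Summable.of_nonneg_of_le (fun n => sq_nonneg _) (fun n => ?_)
      (h_u0.mul_left (∑' n : ℤ, ‖FC u n‖))
    have h := Summable.le_tsum h_u0 n fun _ _ => norm_nonneg _
    nlinarith [norm_nonneg (FC u n)]
  have sum_h' : Summable (fun m : ℤ => ((m : ℝ)) ^ 2 * ‖FC v (-m)‖) := by
    have := (Equiv.neg ℤ).summable_iff.mpr h_v2
    refine this.congr fun m => ?_
    simp only [Function.comp, Equiv.neg_apply]
    push_cast
    ring
  have hbase : Summable (fun q : ℤ × ℤ => ‖FC u q.1‖ ^ 2 * (((q.2 : ℝ)) ^ 2 * ‖FC v (-q.2)‖)) :=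
    sum_a2.mul_of_nonneg sum_h' (fun n => sq_nonneg _) (fun n => by positivity)
  -- R1 and R2 : summability and tsum values
  have hR1sum : Summable (fun p : ℤ × ℤ =>
      ‖FC u p.1‖ ^ 2 * (((p.1 : ℝ) + (p.2 : ℝ)) ^ 2 * ‖FC v (-(p.1 + p.2))‖)) := by
    have h := (Equiv.prodShear (Equiv.refl ℤ) (fun n : ℤ => Equiv.addLeft n)).summable_iff.mpr hbase
    refine h.congr fun p => ?_
    show ‖FC u p.1‖ ^ 2 * ((((p.1 + p.2 : ℤ) : ℝ)) ^ 2 * ‖FC v (-(p.1 + p.2))‖) = _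
    push_cast
    ring
  have hR2sum : Summable (fun p : ℤ × ℤ =>
      ‖FC u p.2‖ ^ 2 * (((p.1 : ℝ) + (p.2 : ℝ)) ^ 2 * ‖FC v (-(p.1 + p.2))‖)) := by
    have h := ((Equiv.prodComm ℤ ℤ).trans
      (Equiv.prodShear (Equiv.refl ℤ) (fun n : ℤ => Equiv.addLeft n))).summable_iff.mpr hbase
    refine h.congr fun p => ?_
    show ‖FC u p.2‖ ^ 2 * ((((p.2 + p.1 : ℤ) : ℝ)) ^ 2 * ‖FC v (-(p.2 + p.1))‖) = _
    rw [show (p.2 + p.1 : ℤ) = p.1 + p.2 from add_comm _ _]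
    push_cast
    ring
  have htR1 : ∑' p : ℤ × ℤ, ‖FC u p.1‖ ^ 2 * (((p.1 : ℝ) + (p.2 : ℝ)) ^ 2 * ‖FC v (-(p.1 + p.2))‖)
      = (∑' n : ℤ, ‖FC u n‖ ^ 2) * ∑' m : ℤ, ((m : ℝ)) ^ 2 * ‖FC v (-m)‖ := by
    have step1 : ∑' p : ℤ × ℤ, ‖FC u p.1‖ ^ 2 * (((p.1 : ℝ) + (p.2 : ℝ)) ^ 2 * ‖FC v (-(p.1 + p.2))‖)
        = ∑' q : ℤ × ℤ, ‖FC u q.1‖ ^ 2 * (((q.2 : ℝ)) ^ 2 * ‖FC v (-q.2)‖) := by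
      rw [← (Equiv.prodShear (Equiv.refl ℤ) (fun n : ℤ => Equiv.addLeft n)).tsum_eq
        (fun q : ℤ × ℤ => ‖FC u q.1‖ ^ 2 * (((q.2 : ℝ)) ^ 2 * ‖FC v (-q.2)‖))]
      refine tsum_congr fun p => ?_
      show _ = ‖FC u p.1‖ ^ 2 * ((((p.1 + p.2 : ℤ) : ℝ)) ^ 2 * ‖FC v (-(p.1 + p.2))‖)
      push_cast
      ring
    rw [step1, Summable.tsum_prod' hbase hbase.prod_factor]
    simp_rw [tsum_mul_left]
    rw [tsum_mul_right]
  have htR2 : ∑' p : ℤ × ℤ, ‖FC u p.2‖ ^ 2 * (((p.1 : ℝ) + (p.2 : ℝ)) ^ 2 * ‖FC v (-(p.1 + p.2))‖)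
      = (∑' n : ℤ, ‖FC u n‖ ^ 2) * ∑' m : ℤ, ((m : ℝ)) ^ 2 * ‖FC v (-m)‖ := by
    have step1 : ∑' p : ℤ × ℤ, ‖FC u p.2‖ ^ 2 * (((p.1 : ℝ) + (p.2 : ℝ)) ^ 2 * ‖FC v (-(p.1 + p.2))‖)
        = ∑' q : ℤ × ℤ, ‖FC u q.1‖ ^ 2 * (((q.2 : ℝ)) ^ 2 * ‖FC v (-q.2)‖) := by
      rw [← ((Equiv.prodComm ℤ ℤ).trans
        (Equiv.prodShear (Equiv.refl ℤ) (fun n : ℤ => Equiv.addLeft n))).tsum_eq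
        (fun q : ℤ × ℤ => ‖FC u q.1‖ ^ 2 * (((q.2 : ℝ)) ^ 2 * ‖FC v (-q.2)‖))]
      refine tsum_congr fun p => ?_
      show _ = ‖FC u p.2‖ ^ 2 * ((((p.2 + p.1 : ℤ) : ℝ)) ^ 2 * ‖FC v (-(p.2 + p.1))‖)
      rw [show (p.2 + p.1 : ℤ) = p.1 + p.2 from add_comm _ _]
      push_cast
      ring
    rw [step1, Summable.tsum_prod' hbase hbase.prod_factor]
    simp_rw [tsum_mul_left]
    rw [tsum_mul_right]
  -- main bound
  have hsum_le : ∑' p : ℤ × ℤ, ‖Pfun u v p + Pfun u v p.swap‖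
      ≤ ∑' p : ℤ × ℤ, (‖FC u p.1‖ ^ 2 * (((p.1 : ℝ) + (p.2 : ℝ)) ^ 2 * ‖FC v (-(p.1 + p.2))‖)
        + ‖FC u p.2‖ ^ 2 * (((p.1 : ℝ) + (p.2 : ℝ)) ^ 2 * ‖FC v (-(p.1 + p.2))‖)) :=
    Summable.tsum_le_tsum hQb hQnorm (hR1sum.add hR2sum)
  have htadd : ∑' p : ℤ × ℤ, (‖FC u p.1‖ ^ 2 * (((p.1 : ℝ) + (p.2 : ℝ)) ^ 2 * ‖FC v (-(p.1 + p.2))‖)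
        + ‖FC u p.2‖ ^ 2 * (((p.1 : ℝ) + (p.2 : ℝ)) ^ 2 * ‖FC v (-(p.1 + p.2))‖))
      = 2 * ((∑' n : ℤ, ‖FC u n‖ ^ 2) * ∑' m : ℤ, ((m : ℝ)) ^ 2 * ‖FC v (-m)‖) := by
    rw [Summable.tsum_add hR1sum hR2sum, htR1, htR2]
    ring
  have hmain : |inn d u|
      ≤ (∑' n : ℤ, ‖FC u n‖ ^ 2) * ∑' m : ℤ, ((m : ℝ)) ^ 2 * ‖FC v (-m)‖ := by
    rw [htadd] at hsum_le
    linarith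
  -- Sobolev bound on the v-sum
  have hSh : ∑' m : ℤ, ((m : ℝ)) ^ 2 * ‖FC v (-m)‖ ≤ C₀ * HsNorm (s₀ + 2) v := by
    have hre : ∑' m : ℤ, ((m : ℝ)) ^ 2 * ‖FC v (-m)‖ = ∑' m : ℤ, ((m : ℝ)) ^ 2 * ‖FC v m‖ := by
      rw [← (Equiv.neg ℤ).tsum_eq (fun m : ℤ => ((m : ℝ)) ^ 2 * ‖FC v m‖)]
      refine tsum_congr fun m => ?_
      show _ = (((-m : ℤ) : ℝ)) ^ 2 * ‖FC v (-m)‖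
      push_cast
      ring
    rw [hre]
    have hpos : ∀ m : ℤ, (0 : ℝ) < 1 + (m : ℝ) ^ 2 := fun m => by positivity
    set b : ℤ → ℝ := fun m => ((m : ℝ)) ^ 2 * (1 + (m : ℝ) ^ 2) ^ (-(s₀ + 2) / 2) with hbdef
    set c : ℤ → ℝ := fun m => (1 + (m : ℝ) ^ 2) ^ ((s₀ + 2) / 2) * ‖FC v m‖ with hcdef
    have hbsq : ∀ m : ℤ, b m ^ 2 = ((m : ℝ)) ^ 4 * (1 + (m : ℝ) ^ 2) ^ (-(s₀ + 2)) := by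
      intro m
      calc b m ^ 2 = ((m : ℝ) ^ 2) ^ 2 * ((1 + (m : ℝ) ^ 2) ^ (-(s₀ + 2) / 2)) ^ 2 := by
            rw [hbdef]; ring
        _ = ((m : ℝ)) ^ 4 * (1 + (m : ℝ) ^ 2) ^ (2 * (-(s₀ + 2) / 2)) := by
            rw [rpow_sq (hpos m)]; ring
        _ = ((m : ℝ)) ^ 4 * (1 + (m : ℝ) ^ 2) ^ (-(s₀ + 2)) := by
            rw [show (2 : ℝ) * (-(s₀ + 2) / 2) = -(s₀ + 2) from by ring]
    have hble : ∀ m : ℤ, b m ^ 2 ≤ (1 + (m : ℝ) ^ 2) ^ (-s₀) := by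
      intro m
      have h4 : ((m : ℝ)) ^ 4 ≤ (1 + (m : ℝ) ^ 2) ^ ((2 : ℕ) : ℝ) := by
        rw [Real.rpow_natCast]
        nlinarith [sq_nonneg ((m : ℝ)), sq_nonneg ((m : ℝ) ^ 2)]
      calc b m ^ 2 = ((m : ℝ)) ^ 4 * (1 + (m : ℝ) ^ 2) ^ (-(s₀ + 2)) := hbsq m
        _ ≤ (1 + (m : ℝ) ^ 2) ^ ((2 : ℕ) : ℝ) * (1 + (m : ℝ) ^ 2) ^ (-(s₀ + 2)) :=
            mul_le_mul_of_nonneg_right h4 (Real.rpow_nonneg (hpos m).le _)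
        _ = (1 + (m : ℝ) ^ 2) ^ (((2 : ℕ) : ℝ) + -(s₀ + 2)) := (Real.rpow_add (hpos m) _ _).symm
        _ = (1 + (m : ℝ) ^ 2) ^ (-s₀) := by norm_num
    have hcsq : ∀ m : ℤ, c m ^ 2 = (1 + (m : ℝ) ^ 2) ^ (s₀ + 2) * ‖FC v m‖ ^ 2 := by
      intro m
      calc c m ^ 2 = ((1 + (m : ℝ) ^ 2) ^ ((s₀ + 2) / 2)) ^ 2 * ‖FC v m‖ ^ 2 := by
            rw [hcdef]; ring
        _ = (1 + (m : ℝ) ^ 2) ^ (2 * ((s₀ + 2) / 2)) * ‖FC v m‖ ^ 2 := by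
            rw [rpow_sq (hpos m)]
        _ = (1 + (m : ℝ) ^ 2) ^ (s₀ + 2) * ‖FC v m‖ ^ 2 := by
            rw [show (2 : ℝ) * ((s₀ + 2) / 2) = s₀ + 2 from by ring]
    have hsumb2 : Summable (fun m : ℤ => b m ^ 2) :=
      Summable.of_nonneg_of_le (fun m => sq_nonneg _) hble (sum_neg_weight hs₀)
    have hsumc2 : Summable (fun m : ℤ => c m ^ 2) := by
      refine Summable.of_nonneg_of_le (fun m => sq_nonneg _) (fun m => ?_)
        (((h_v0.add h_v2K).mul_left ((2 : ℝ) ^ K * Bv)))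
      rw [hcsq m]
      have hx : (0 : ℝ) ≤ (m : ℝ) ^ 2 := sq_nonneg _
      have h1 : (1 + (m : ℝ) ^ 2) ^ (s₀ + 2) ≤ (1 + (m : ℝ) ^ 2) ^ ((K : ℕ) : ℝ) :=
        Real.rpow_le_rpow_of_exponent_le (by nlinarith) hKle
      have h2 : (1 + (m : ℝ) ^ 2) ^ ((K : ℕ) : ℝ) = (1 + (m : ℝ) ^ 2) ^ (K : ℕ) :=
        Real.rpow_natCast _ K
      have h3 : (1 + (m : ℝ) ^ 2) ^ (K : ℕ) ≤ 2 ^ K * (1 + ((m : ℝ) ^ 2) ^ K) :=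
        pow_one_add_le _ hx K
      have h4 : ((m : ℝ) ^ 2) ^ K = |(m : ℝ)| ^ (2 * K) := by
        rw [← _root_.sq_abs, ← pow_mul]
      have h5 : ‖FC v m‖ ^ 2 ≤ Bv * ‖FC v m‖ := by
        nlinarith [hBv m, norm_nonneg (FC v m)]
      have hT : (1 + (m : ℝ) ^ 2) ^ (s₀ + 2) ≤ 2 ^ K * (1 + |(m : ℝ)| ^ (2 * K)) := by
        rw [← h4]
        exact h1.trans (le_of_eq_of_le h2 h3)
      have hTnn : (0 : ℝ) ≤ 2 ^ K * (1 + |(m : ℝ)| ^ (2 * K)) := by positivity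
      calc (1 + (m : ℝ) ^ 2) ^ (s₀ + 2) * ‖FC v m‖ ^ 2
          ≤ (2 ^ K * (1 + |(m : ℝ)| ^ (2 * K))) * (Bv * ‖FC v m‖) :=
            mul_le_mul hT h5 (sq_nonneg _) hTnn
        _ = 2 ^ K * Bv * (‖FC v m‖ + |(m : ℝ)| ^ (2 * K) * ‖FC v m‖) := by ring
    have hbc : ∀ m : ℤ, ((m : ℝ)) ^ 2 * ‖FC v m‖ = b m * c m := by
      intro m
      rw [hbdef, hcdef]
      show ((m : ℝ)) ^ 2 * ‖FC v m‖
          = (m : ℝ) ^ 2 * (1 + (m : ℝ) ^ 2) ^ (-(s₀ + 2) / 2)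
            * ((1 + (m : ℝ) ^ 2) ^ ((s₀ + 2) / 2) * ‖FC v m‖)
      rw [show (m : ℝ) ^ 2 * (1 + (m : ℝ) ^ 2) ^ (-(s₀ + 2) / 2)
            * ((1 + (m : ℝ) ^ 2) ^ ((s₀ + 2) / 2) * ‖FC v m‖)
          = (m : ℝ) ^ 2 * ((1 + (m : ℝ) ^ 2) ^ (-(s₀ + 2) / 2)
            * (1 + (m : ℝ) ^ 2) ^ ((s₀ + 2) / 2)) * ‖FC v m‖ from by ring,
        ← Real.rpow_add (hpos m),
        show -(s₀ + 2) / 2 + (s₀ + 2) / 2 = (0 : ℝ) from by ring,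
        Real.rpow_zero, mul_one]
    rw [tsum_congr hbc]
    have hCS := tsum_CS (b := b) (c := c)
      (fun m => by rw [hbdef]; positivity)
      (fun m => by rw [hcdef]; positivity)
      hsumb2 hsumc2
    refine hCS.trans ?_
    have hs1 : Real.sqrt (∑' m : ℤ, b m ^ 2) ≤ C₀ := by
      rw [hC₀def]
      exact Real.sqrt_le_sqrt (Summable.tsum_le_tsum hble hsumb2 (sum_neg_weight hs₀))
    have hs2 : Real.sqrt (∑' m : ℤ, c m ^ 2) = HsNorm (s₀ + 2) v := by
      rw [HsNorm]
      congr 1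
      exact tsum_congr fun m => hcsq m
    rw [hs2]
    exact mul_le_mul_of_nonneg_right hs1 (by rw [HsNorm]; exact Real.sqrt_nonneg _)
  -- conclusion
  have hA2 : ∑' n : ℤ, ‖FC u n‖ ^ 2 = HsNorm 0 u ^ 2 := by
    rw [HsNorm, Real.sq_sqrt (tsum_nonneg fun n => by positivity)]
    exact tsum_congr fun n => by rw [Real.rpow_zero, one_mul]
  have hNv : 0 ≤ HsNorm (s₀ + 2) v := by rw [HsNorm]; exact Real.sqrt_nonneg _
  calc |inn d u|
      ≤ (∑' n : ℤ, ‖FC u n‖ ^ 2) * ∑' m : ℤ, ((m : ℝ)) ^ 2 * ‖FC v (-m)‖ := hmain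
    _ = HsNorm 0 u ^ 2 * ∑' m : ℤ, ((m : ℝ)) ^ 2 * ‖FC v (-m)‖ := by rw [hA2]
    _ ≤ HsNorm 0 u ^ 2 * (C₀ * HsNorm (s₀ + 2) v) :=
        mul_le_mul_of_nonneg_left hSh (sq_nonneg _)
    _ ≤ (C₀ + 1) * HsNorm (s₀ + 2) v * HsNorm 0 u ^ 2 := by
        nlinarith [sq_nonneg (HsNorm 0 u), hNv, hC₀nn, mul_nonneg hNv (sq_nonneg (HsNorm 0 u))]

end
end

section
/- Let s₀ > 5/2. There exists C > 0 such that for all u ∈ H^{s₀}(𝕋) and v ∈ L²(𝕋): ‖J∂_x(u ∂_x²v) + u H∂_x²v‖_{L²} ≤ C‖u‖_{H^{s₀}}‖v‖_{L²}, where H is the Hilbert transform and J is the Fourier multiplier ψ(ξ)/|ξ|. -/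
open MeasureTheory Real Complex AddCircle
open scoped BigOperators ENNReal

noncomputable section

section Aux

open scoped ENNReal

private lemma tsum_CS' (f g : ℤ → ℝ≥0∞) :
    ∑' k, f k * g k ≤ (∑' k, f k ^ 2) ^ (2:ℝ)⁻¹ * (∑' k, g k ^ 2) ^ (2:ℝ)⁻¹ := by
  have hc : (2:ℝ).HolderConjugate 2 := ⟨by norm_num, by norm_num, by norm_num⟩
  have h := ENNReal.lintegral_mul_le_Lp_mul_Lq (Measure.count : Measure ℤ)
    hc (f := f) (g := g)
    (measurable_of_countable f).aemeasurable (measurable_of_countable g).aemeasurable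
  simp only [Pi.mul_apply, lintegral_count] at h
  have e2 : ∀ h : ℤ → ℝ≥0∞, ∀ k, h k ^ (2:ℝ) = h k ^ 2 := fun h k => by
    rw [← ENNReal.rpow_natCast]; norm_num
  simpa [e2, one_div] using h

private lemma rpow_half_sq' (x : ℝ≥0∞) : (x ^ (2:ℝ)⁻¹) ^ 2 = x := by
  rw [← ENNReal.rpow_natCast (x ^ (2:ℝ)⁻¹) 2, ← ENNReal.rpow_mul]
  norm_num

private lemma tsum_CS_sq' (f g : ℤ → ℝ≥0∞) :
    (∑' k, f k * g k) ^ 2 ≤ (∑' k, f k ^ 2) * (∑' k, g k ^ 2) := by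
  calc (∑' k, f k * g k) ^ 2
      ≤ ((∑' k, f k ^ 2) ^ (2:ℝ)⁻¹ * (∑' k, g k ^ 2) ^ (2:ℝ)⁻¹) ^ 2 :=
        pow_le_pow_left' (tsum_CS' f g) 2
    _ = (∑' k, f k ^ 2) * (∑' k, g k ^ 2) := by
        rw [mul_pow, rpow_half_sq', rpow_half_sq']

private lemma young' (F b : ℤ → ℝ≥0∞) :
    ∑' n : ℤ, (∑' m : ℤ, F (n - m) * b m) ^ 2 ≤
      (∑' k : ℤ, F k) ^ 2 * ∑' m : ℤ, (b m) ^ 2 := by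
  set A := ∑' k : ℤ, F k with hA
  have hshiftL : ∀ n : ℤ, ∑' m : ℤ, F (n - m) = A := fun n => (Equiv.subLeft n).tsum_eq F
  have hshiftR : ∀ m : ℤ, ∑' n : ℤ, F (n - m) = A := fun m => (Equiv.subRight m).tsum_eq F
  have step1 : ∀ n : ℤ, (∑' m : ℤ, F (n - m) * b m) ^ 2 ≤
      A * ∑' m : ℤ, F (n - m) * (b m) ^ 2 := by
    intro n
    have key : ∀ m : ℤ, F (n - m) * b m =
        (F (n - m) ^ (2:ℝ)⁻¹) * ((F (n - m) ^ (2:ℝ)⁻¹) * b m) := by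
      intro m
      rw [← mul_assoc, ← sq, rpow_half_sq']
    calc (∑' m : ℤ, F (n - m) * b m) ^ 2
        = (∑' m : ℤ, (F (n - m) ^ (2:ℝ)⁻¹) * ((F (n - m) ^ (2:ℝ)⁻¹) * b m)) ^ 2 := by
          simp_rw [← key]
      _ ≤ (∑' m : ℤ, (F (n - m) ^ (2:ℝ)⁻¹) ^ 2) *
            (∑' m : ℤ, ((F (n - m) ^ (2:ℝ)⁻¹) * b m) ^ 2) :=
          tsum_CS_sq' _ _
      _ = A * ∑' m : ℤ, F (n - m) * (b m) ^ 2 := by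
          simp_rw [mul_pow, rpow_half_sq', hshiftL n]
  calc ∑' n : ℤ, (∑' m : ℤ, F (n - m) * b m) ^ 2
      ≤ ∑' n : ℤ, A * ∑' m : ℤ, F (n - m) * (b m) ^ 2 := ENNReal.tsum_le_tsum step1
    _ = A * ∑' n : ℤ, ∑' m : ℤ, F (n - m) * (b m) ^ 2 := ENNReal.tsum_mul_left
    _ = A * ∑' m : ℤ, ∑' n : ℤ, F (n - m) * (b m) ^ 2 := by rw [ENNReal.tsum_comm]
    _ = A * ∑' m : ℤ, A * (b m) ^ 2 := by
        congr 1
        refine tsum_congr fun m => ?_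
        rw [ENNReal.tsum_mul_right, hshiftR m]
    _ = A ^ 2 * ∑' m : ℤ, (b m) ^ 2 := by rw [ENNReal.tsum_mul_left, ← mul_assoc, sq]

private lemma summable_weight' {t : ℝ} (ht : t < -(1/2)) :
    Summable (fun k : ℤ => (1 + (k : ℝ) ^ 2) ^ t) := by
  have h2t : 2 * t < -1 := by linarith
  have hnat : Summable (fun n : ℕ => ((n : ℝ) + 1) ^ (2 * t)) := by
    have := Real.summable_nat_rpow.2 h2t
    have h1 := (summable_nat_add_iff (f := fun n : ℕ => (n : ℝ) ^ (2 * t)) 1).2 this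
    refine h1.congr fun n => ?_
    push_cast
    ring_nf
  have hbound : ∀ n : ℕ, (1 + (n : ℝ) ^ 2) ^ t ≤ (2 : ℝ) ^ (-t) * ((n : ℝ) + 1) ^ (2 * t) := by
    intro n
    have hpos : (0 : ℝ) < ((n : ℝ) + 1) ^ 2 / 2 := by positivity
    have hle : ((n : ℝ) + 1) ^ 2 / 2 ≤ 1 + (n : ℝ) ^ 2 := by nlinarith [sq_nonneg ((n:ℝ) - 1)]
    have h := Real.rpow_le_rpow_of_nonpos hpos hle (show t ≤ 0 by linarith)
    calc (1 + (n : ℝ) ^ 2) ^ t ≤ (((n : ℝ) + 1) ^ 2 / 2) ^ t := h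
      _ = (2 : ℝ) ^ (-t) * ((n : ℝ) + 1) ^ (2 * t) := by
          rw [Real.div_rpow (by positivity) (by norm_num), ← Real.rpow_natCast ((n:ℝ)+1) 2,
            ← Real.rpow_mul (by positivity), div_eq_mul_inv, ← Real.rpow_neg (by norm_num)]
          push_cast
          ring_nf
  have hNat : Summable (fun n : ℕ => (1 + (n : ℝ) ^ 2) ^ t) :=
    Summable.of_nonneg_of_le (fun n => by positivity) hbound (hnat.mul_left _)
  refine Summable.of_nat_of_neg ?_ ?_
  · exact hNat.congr fun n => by norm_num
  · exact hNat.congr fun n => by push_cast; ring_nf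

private lemma sq_rpow' {y : ℝ} (hy : 0 < y) (a : ℝ) : (y ^ a) ^ 2 = y ^ (2 * a) := by
  rw [← Real.rpow_natCast (y ^ a) 2, ← Real.rpow_mul hy.le]
  norm_num
  rw [mul_comm]

private lemma mult_bound' (ψ : ℝ → ℝ) (hψ : IsCutoff ψ) (n m : ℤ) :
    ‖(symJ ψ n * symDx n + symH m) * symDx m ^ 2‖ ≤ 4 * (1 + ((n - m : ℤ) : ℝ) ^ 2) := by
  obtain ⟨-, hψ0, hψ1, hψ2, hψ3⟩ := hψ
  set t : ℝ := ψ n / |(n : ℝ)| * n - (Int.sign m : ℝ) with ht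
  have hsum : symJ ψ n * symDx n + symH m = Complex.I * (t : ℂ) := by
    simp only [symJ, symDx, symH, ht]
    push_cast
    ring
  have hnorm : ‖(symJ ψ n * symDx n + symH m) * symDx m ^ 2‖ = |t| * (m : ℝ) ^ 2 := by
    rw [hsum]
    simp [symDx, norm_mul, Complex.norm_real, mul_pow, _root_.sq_abs]
  rw [hnorm]
  have htle : |t| ≤ 2 := by
    have h1 : |ψ n / |(n : ℝ)| * n| ≤ 1 := by
      rcases eq_or_ne n 0 with rfl | hn
      · simp
      · have hn' : |(n : ℝ)| ≠ 0 := by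
          simp [abs_eq_zero, Int.cast_eq_zero, hn]
        rw [abs_mul, abs_div, _root_.abs_abs, div_mul_cancel₀ _ hn']
        rw [_root_.abs_of_nonneg (hψ0 _)]
        exact hψ1 _
    have h2 : |(Int.sign m : ℝ)| ≤ 1 := by
      rcases Int.lt_trichotomy m 0 with h|h|h <;>
        simp [Int.sign_eq_neg_one_of_neg, Int.sign_eq_one_of_pos, h, abs_le]
    calc |t| ≤ |ψ n / |(n : ℝ)| * n| + |(Int.sign m : ℝ)| := abs_sub _ _
      _ ≤ 2 := by linarith
  have hcast : ((n - m : ℤ) : ℝ) = (n : ℝ) - (m : ℝ) := by push_cast; ring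
  rcases le_or_gt (n * m) 0 with hnm | hnm
  · have hm2 : (m : ℝ) ^ 2 ≤ ((n : ℝ) - m) ^ 2 := by
      have : (n : ℝ) * m ≤ 0 := by exact_mod_cast hnm
      nlinarith [sq_nonneg ((n:ℝ))]
    rw [hcast]
    nlinarith [abs_nonneg t, sq_nonneg ((n:ℝ) - m)]
  · have hn0 : n ≠ 0 := by rintro rfl; simp at hnm
    have hm0 : m ≠ 0 := by rintro rfl; simp at hnm
    rcases le_or_gt 2 |n| with h2 | h2
    · have hψn : ψ n = 1 := by
        apply hψ2
        rw [← Int.cast_abs]; exact_mod_cast h2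
      have hsign : Int.sign n = Int.sign m := by
        rcases Int.lt_trichotomy n 0 with hn|hn|hn
        · rcases Int.lt_trichotomy m 0 with hm|hm|hm
          · rw [Int.sign_eq_neg_one_of_neg hn, Int.sign_eq_neg_one_of_neg hm]
          · exact absurd hm hm0
          · exfalso; nlinarith
        · exact absurd hn hn0
        · rcases Int.lt_trichotomy m 0 with hm|hm|hm
          · exfalso; nlinarith
          · exact absurd hm hm0
          · rw [Int.sign_eq_one_of_pos hn, Int.sign_eq_one_of_pos hm]
      have ht0 : t = 0 := by
        rw [ht, hψn, ← hsign]
        rcases Int.lt_trichotomy n 0 with hn|hn|hn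
        · have hlt : (n : ℝ) < 0 := by exact_mod_cast hn
          rw [abs_of_neg hlt, Int.sign_eq_neg_one_of_neg hn]
          push_cast
          field_simp
          norm_num
        · exact absurd hn hn0
        · have hlt : (0:ℝ) < n := by exact_mod_cast hn
          rw [abs_of_pos hlt, Int.sign_eq_one_of_pos hn]
          push_cast
          field_simp
          norm_num
      rw [ht0]
      simp
      positivity
    · have hn1 : |n| = 1 := by
        rcases le_or_gt 0 n with h|h
        · rw [abs_of_nonneg h] at h2 ⊢; omega
        · rw [abs_of_neg h] at h2 ⊢; omega
      have habs : |(m : ℝ)| ≤ |(n : ℝ) - m| + 1 := by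
        have hone : |(n : ℝ)| = 1 := by rw [← Int.cast_abs, hn1]; norm_num
        calc |(m : ℝ)| = |(n : ℝ) - ((n : ℝ) - m)| := by ring_nf
          _ ≤ |(n : ℝ)| + |(n : ℝ) - m| := abs_sub _ _
          _ = |(n : ℝ) - m| + 1 := by rw [hone]; ring
      rw [hcast]
      have e1 : |t| * (m:ℝ)^2 ≤ 2 * (m:ℝ)^2 :=
        mul_le_mul_of_nonneg_right htle (sq_nonneg _)
      have e2 : (m:ℝ)^2 ≤ 2*((n:ℝ)-m)^2 + 2 := by
        nlinarith [sq_nonneg (|(n:ℝ)-(m:ℝ)| - 1), _root_.sq_abs ((n:ℝ)-(m:ℝ)),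
          _root_.sq_abs ((m:ℝ)), mul_self_le_mul_self (abs_nonneg ((m:ℝ))) habs]
      linarith

end Aux

/-- `‖J∂ₓ(u ∂ₓ²v) + u H∂ₓ²v‖_{L²} ≤ C‖u‖_{H^{s₀}}‖v‖_{L²}`
(the left-hand side described through its Fourier coefficients). -/
theorem statement10 (s₀ : ℝ) (hs₀ : 5 / 2 < s₀) (ψ : ℝ → ℝ) (hψ : IsCutoff ψ) :
    ∃ C > (0 : ℝ), ∀ u v G : Torus → ℝ,
      Continuous u → MemHs s₀ u →
      MemLp v 2 haarAddCircle → MemHs 0 v →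
      (∀ n : ℤ, FC G n =
        ∑' m : ℤ, (symJ ψ n * symDx n + symH m) * symDx m ^ 2 * FC u (n - m) * FC v m) →
      HsNorm 0 G ≤ C * HsNorm s₀ u * HsNorm 0 v := by
  have hs2 : (2 : ℝ) - s₀ < -(1/2) := by linarith
  have hwsum : Summable (fun k : ℤ => (1 + (k : ℝ) ^ 2) ^ ((2:ℝ) - s₀)) := summable_weight' hs2
  have hSKsum : Summable (fun k : ℤ => 16 * (1 + (k:ℝ)^2) ^ ((2:ℝ) - s₀)) := hwsum.mul_left 16
  set SK : ℝ := ∑' k : ℤ, 16 * (1 + (k : ℝ) ^ 2) ^ ((2:ℝ) - s₀) with hSK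
  have hSKnonneg : 0 ≤ SK := tsum_nonneg (fun k => by positivity)
  refine ⟨Real.sqrt SK + 1, by positivity, ?_⟩
  intro u v G hu hus hv hvs hG
  set Su : ℝ := ∑' k : ℤ, (1 + (k:ℝ)^2) ^ s₀ * ‖FC u k‖^2 with hSu
  set Sv : ℝ := ∑' m : ℤ, ‖FC v m‖^2 with hSv
  have hus' : Summable (fun k : ℤ => (1 + (k:ℝ)^2) ^ s₀ * ‖FC u k‖^2) := hus
  have hvs' : Summable (fun m : ℤ => ‖FC v m‖^2) := by
    have h := hvs
    unfold MemHs at h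
    simpa [Real.rpow_zero] using h
  have hSvnonneg : 0 ≤ Sv := tsum_nonneg fun m => by positivity
  have hSunonneg : 0 ≤ Su := tsum_nonneg fun k => by positivity
  have hBv : ∀ m : ℤ, ‖FC v m‖ ≤ Real.sqrt Sv := by
    intro m
    have h1 : ‖FC v m‖^2 ≤ Sv := Summable.le_tsum hvs' m (fun _ _ => by positivity)
    calc ‖FC v m‖ = Real.sqrt (‖FC v m‖^2) := (Real.sqrt_sq (norm_nonneg _)).symm
      _ ≤ Real.sqrt Sv := Real.sqrt_le_sqrt h1
  set Fr : ℤ → ℝ := fun k => 4 * (1 + (k:ℝ)^2) * ‖FC u k‖ with hFr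
  have hFrnonneg : ∀ k, 0 ≤ Fr k := fun k => by
    simp only [hFr]; positivity
  have hFrsum : Summable Fr := by
    have key : ∀ k : ℤ, Fr k ≤
        16 * (1 + (k:ℝ)^2) ^ ((2:ℝ) - s₀) + (1 + (k:ℝ)^2) ^ s₀ * ‖FC u k‖^2 := by
      intro k
      have hypos : (0:ℝ) < 1 + (k:ℝ)^2 := by positivity
      set y : ℝ := 1 + (k:ℝ)^2 with hy
      set a : ℝ := 4 * y ^ ((1:ℝ) - s₀/2) with ha
      set b : ℝ := y ^ (s₀/2) * ‖FC u k‖ with hb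
      have hanneg : 0 ≤ a := by positivity
      have hbnneg : 0 ≤ b := by positivity
      have hab : Fr k = a * b := by
        have hyy : y ^ ((1:ℝ) - s₀/2) * y ^ (s₀/2) = y := by
          rw [← Real.rpow_add hypos]; norm_num
        calc Fr k = 4 * (y ^ ((1:ℝ) - s₀/2) * y ^ (s₀/2)) * ‖FC u k‖ := by
              rw [hyy]
          _ = a * b := by rw [ha, hb]; ring
      have ha2 : a^2 = 16 * y ^ ((2:ℝ) - s₀) := by
        have h1 : (y ^ ((1:ℝ) - s₀/2))^2 = y ^ ((2:ℝ) - s₀) := by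
          rw [sq_rpow' hypos]
          congr 1
          ring
        rw [ha, mul_pow, h1]; norm_num
      have hb2 : b^2 = y ^ s₀ * ‖FC u k‖^2 := by
        rw [hb, mul_pow, sq_rpow' hypos]
        congr 2
        ring
      have hamgm : a * b ≤ a^2 + b^2 := by
        nlinarith [sq_nonneg (a - b), mul_nonneg hanneg hbnneg]
      rw [hab]
      rw [ha2, hb2] at hamgm
      exact hamgm
    exact Summable.of_nonneg_of_le hFrnonneg key (hSKsum.add hus')
  set Fe : ℤ → ℝ≥0∞ := fun k => ENNReal.ofReal (Fr k) with hFe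
  set be : ℤ → ℝ≥0∞ := fun m => ENNReal.ofReal ‖FC v m‖ with hbe
  have step1 : ∀ n : ℤ, ENNReal.ofReal ‖FC G n‖ ≤ ∑' m : ℤ, Fe (n - m) * be m := by
    intro n
    set c : ℤ → ℝ := fun m => Fr (n - m) * ‖FC v m‖ with hc
    have hcnonneg : ∀ m, 0 ≤ c m := fun m => mul_nonneg (hFrnonneg _) (norm_nonneg _)
    have hshift : Summable (fun m : ℤ => Fr (n - m)) := by
      have := (Equiv.subLeft n).summable_iff.2 hFrsum
      exact this
    have hcsum : Summable c := by
      refine Summable.of_nonneg_of_le hcnonneg (fun m => ?_) (hshift.mul_right (Real.sqrt Sv))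
      exact mul_le_mul_of_nonneg_left (hBv m) (hFrnonneg _)
    have hterm : ∀ m : ℤ,
        ‖(symJ ψ n * symDx n + symH m) * symDx m ^ 2 * FC u (n - m) * FC v m‖ ≤ c m := by
      intro m
      rw [norm_mul, norm_mul]
      have h1 := mult_bound' ψ hψ n m
      calc ‖(symJ ψ n * symDx n + symH m) * symDx m ^ 2‖ * ‖FC u (n - m)‖ * ‖FC v m‖
          ≤ (4 * (1 + ((n - m : ℤ) : ℝ)^2) * ‖FC u (n - m)‖) * ‖FC v m‖ := by
            apply mul_le_mul_of_nonneg_right _ (norm_nonneg _)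
            exact mul_le_mul_of_nonneg_right h1 (norm_nonneg _)
        _ = c m := rfl
    have hnsum : Summable (fun m : ℤ =>
        ‖(symJ ψ n * symDx n + symH m) * symDx m ^ 2 * FC u (n - m) * FC v m‖) :=
      Summable.of_nonneg_of_le (fun m => norm_nonneg _) hterm hcsum
    have hGn : ‖FC G n‖ ≤ ∑' m, c m := by
      rw [hG n]
      exact (norm_tsum_le_tsum_norm hnsum).trans (Summable.tsum_le_tsum hterm hnsum hcsum)
    calc ENNReal.ofReal ‖FC G n‖ ≤ ENNReal.ofReal (∑' m, c m) := ENNReal.ofReal_le_ofReal hGn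
      _ = ∑' m, ENNReal.ofReal (c m) := ENNReal.ofReal_tsum_of_nonneg hcnonneg hcsum
      _ = ∑' m, Fe (n - m) * be m := by
          refine tsum_congr fun m => ?_
          simp only [hc, hFe, hbe]
          exact ENNReal.ofReal_mul (hFrnonneg _)
  have hCS : (∑' k : ℤ, Fe k)^2 ≤ ENNReal.ofReal SK * ENNReal.ofReal Su := by
    set p : ℤ → ℝ≥0∞ := fun k => ENNReal.ofReal (4 * (1 + (k:ℝ)^2) ^ ((1:ℝ) - s₀/2)) with hp
    set q : ℤ → ℝ≥0∞ := fun k => ENNReal.ofReal ((1 + (k:ℝ)^2) ^ (s₀/2) * ‖FC u k‖) with hq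
    have hypos : ∀ k : ℤ, (0:ℝ) < 1 + (k:ℝ)^2 := fun k => by positivity
    have hpq : ∀ k, Fe k = p k * q k := by
      intro k
      simp only [hFe, hp, hq]
      rw [← ENNReal.ofReal_mul (by positivity)]
      congr 1
      have hyy : (1 + (k:ℝ)^2) ^ ((1:ℝ) - s₀/2) * (1 + (k:ℝ)^2) ^ (s₀/2) = 1 + (k:ℝ)^2 := by
        rw [← Real.rpow_add (hypos k)]; norm_num
      calc Fr k = 4 * ((1 + (k:ℝ)^2) ^ ((1:ℝ) - s₀/2) * (1 + (k:ℝ)^2) ^ (s₀/2)) * ‖FC u k‖ := by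
            rw [hyy]
        _ = 4 * (1 + (k:ℝ)^2) ^ ((1:ℝ) - s₀/2) * ((1 + (k:ℝ)^2) ^ (s₀/2) * ‖FC u k‖) := by ring
    have hp2 : ∀ k, p k ^ 2 = ENNReal.ofReal (16 * (1 + (k:ℝ)^2) ^ ((2:ℝ) - s₀)) := by
      intro k
      simp only [hp]
      rw [← ENNReal.ofReal_pow (by positivity)]
      congr 1
      rw [mul_pow, sq_rpow' (hypos k)]
      norm_num
      congr 1
      ring
    have hq2 : ∀ k, q k ^ 2 = ENNReal.ofReal ((1 + (k:ℝ)^2) ^ s₀ * ‖FC u k‖^2) := by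
      intro k
      simp only [hq]
      rw [← ENNReal.ofReal_pow (by positivity)]
      congr 1
      rw [mul_pow, sq_rpow' (hypos k)]
      congr 2
      ring
    calc (∑' k : ℤ, Fe k)^2 = (∑' k : ℤ, p k * q k)^2 := by simp_rw [hpq]
      _ ≤ (∑' k : ℤ, p k ^ 2) * (∑' k : ℤ, q k ^ 2) := tsum_CS_sq' p q
      _ = ENNReal.ofReal SK * ENNReal.ofReal Su := by
          rw [tsum_congr hp2, tsum_congr hq2,
            ← ENNReal.ofReal_tsum_of_nonneg (fun k => by positivity) hSKsum,
            ← ENNReal.ofReal_tsum_of_nonneg (fun k => by positivity) hus']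
  have hbe2 : ∑' m : ℤ, be m ^ 2 = ENNReal.ofReal Sv := by
    rw [tsum_congr (fun m : ℤ => (ENNReal.ofReal_pow (norm_nonneg (FC v m)) 2).symm),
      ← ENNReal.ofReal_tsum_of_nonneg (fun m => by positivity) hvs']
  have main : ∑' n : ℤ, (ENNReal.ofReal ‖FC G n‖)^2 ≤
      ENNReal.ofReal SK * ENNReal.ofReal Su * ENNReal.ofReal Sv := by
    calc ∑' n : ℤ, (ENNReal.ofReal ‖FC G n‖)^2
        ≤ ∑' n : ℤ, (∑' m : ℤ, Fe (n - m) * be m)^2 :=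
          ENNReal.tsum_le_tsum fun n => pow_le_pow_left' (step1 n) 2
      _ ≤ (∑' k : ℤ, Fe k)^2 * ∑' m : ℤ, be m ^ 2 := young' Fe be
      _ ≤ (ENNReal.ofReal SK * ENNReal.ofReal Su) * ∑' m : ℤ, be m ^ 2 :=
          mul_le_mul_left hCS _
      _ = ENNReal.ofReal SK * ENNReal.ofReal Su * ENNReal.ofReal Sv := by rw [hbe2]
  have hfin : ENNReal.ofReal SK * ENNReal.ofReal Su * ENNReal.ofReal Sv ≠ ⊤ :=
    ENNReal.mul_ne_top (ENNReal.mul_ne_top ENNReal.ofReal_ne_top ENNReal.ofReal_ne_top)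
      ENNReal.ofReal_ne_top
  have hofg : ∀ n : ℤ, ((‖FC G n‖₊ ^ 2 : NNReal) : ℝ≥0∞) = (ENNReal.ofReal ‖FC G n‖)^2 := by
    intro n
    rw [ENNReal.coe_pow, ← enorm_eq_nnnorm, ofReal_norm]
  have hGsummable : Summable (fun n : ℤ => ‖FC G n‖^2) := by
    have h1 : ∑' n : ℤ, ((‖FC G n‖₊ ^ 2 : NNReal) : ℝ≥0∞) ≠ ⊤ := by
      rw [tsum_congr hofg]
      exact ne_top_of_le_ne_top hfin main
    have h2 := ENNReal.tsum_coe_ne_top_iff_summable.1 h1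
    exact (NNReal.summable_coe.2 h2).congr fun n => by push_cast; rfl
  have hGbound : (∑' n : ℤ, ‖FC G n‖^2) ≤ SK * Su * Sv := by
    rw [← ENNReal.ofReal_le_ofReal_iff (by positivity)]
    calc ENNReal.ofReal (∑' n : ℤ, ‖FC G n‖^2)
        = ∑' n : ℤ, ENNReal.ofReal (‖FC G n‖^2) :=
          ENNReal.ofReal_tsum_of_nonneg (fun n => by positivity) hGsummable
      _ = ∑' n : ℤ, (ENNReal.ofReal ‖FC G n‖)^2 :=
          tsum_congr fun n => ENNReal.ofReal_pow (norm_nonneg _) 2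
      _ ≤ ENNReal.ofReal SK * ENNReal.ofReal Su * ENNReal.ofReal Sv := main
      _ = ENNReal.ofReal (SK * Su * Sv) := by
          rw [← ENNReal.ofReal_mul hSKnonneg,
            ← ENNReal.ofReal_mul (mul_nonneg hSKnonneg hSunonneg)]
  have hHG : HsNorm 0 G = Real.sqrt (∑' n : ℤ, ‖FC G n‖^2) := by
    unfold HsNorm
    congr 1
    exact tsum_congr fun n => by rw [Real.rpow_zero, one_mul]
  have hHu : HsNorm s₀ u = Real.sqrt Su := by rw [hSu]; rfl
  have hHv : HsNorm 0 v = Real.sqrt Sv := by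
    unfold HsNorm
    rw [hSv]
    congr 1
    exact tsum_congr fun n => by rw [Real.rpow_zero, one_mul]
  rw [hHG, hHu, hHv]
  calc Real.sqrt (∑' n : ℤ, ‖FC G n‖^2) ≤ Real.sqrt (SK * Su * Sv) :=
        Real.sqrt_le_sqrt hGbound
    _ = Real.sqrt SK * Real.sqrt Su * Real.sqrt Sv := by
        rw [Real.sqrt_mul (mul_nonneg hSKnonneg hSunonneg), Real.sqrt_mul hSKnonneg]
    _ ≤ (Real.sqrt SK + 1) * Real.sqrt Su * Real.sqrt Sv := by
        have h1 := Real.sqrt_nonneg Su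
        have h2 := Real.sqrt_nonneg Sv
        have h3 := Real.sqrt_nonneg SK
        nlinarith

end
end

section
/- Let s₀ > 5/2. There exists C > 0 such that for all u ∈ H^{s₀}(𝕋) and v ∈ L²(𝕋): ‖J∂_x(∂_x u · ∂_x v) + ∂_x u · H∂_x v‖_{L²} ≤ C‖u‖_{H^{s₀}}‖v‖_{L²}. -/
open MeasureTheory Real Complex AddCircle
open scoped BigOperators ENNReal

noncomputable section

namespace Statement11Aux

lemma norm_symDx (k : ℤ) : ‖symDx k‖ = |(k : ℝ)| := by simp [symDx]

lemma norm_symH_le (m : ℤ) : ‖symH m‖ ≤ 1 := by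
  rcases lt_trichotomy m 0 with h | h | h
  · simp [symH, Int.sign_eq_neg_one_iff_neg.mpr h]
  · simp [symH, h]
  · simp [symH, Int.sign_eq_one_iff_pos.mpr h]

lemma symbol_cancel (ψ : ℝ → ℝ) (hψ : IsCutoff ψ) (n m : ℤ)
    (h : (0 < n ∧ 0 < m) ∨ (n < 0 ∧ m < 0)) (hn : 2 ≤ |n|) :
    symJ ψ n * symDx n + symH m = 0 := by
  have hψ1 : ψ (n : ℝ) = 1 := by
    apply hψ.2.2.2.1
    rw [← Int.cast_abs]
    exact_mod_cast hn
  have hne : (n : ℝ) ≠ 0 := by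
    rcases h with ⟨h1, _⟩ | ⟨h1, _⟩ <;> exact_mod_cast (by omega : n ≠ 0)
  have hneC : (n : ℂ) ≠ 0 := by exact_mod_cast (by rcases h with ⟨h1,_⟩|⟨h1,_⟩ <;> omega : n ≠ 0)
  rcases h with ⟨hn1, hm1⟩ | ⟨hn1, hm1⟩
  · have habs : |(n : ℝ)| = (n : ℝ) := abs_of_pos (by exact_mod_cast hn1)
    have hsgn : Int.sign m = 1 := Int.sign_eq_one_iff_pos.mpr hm1
    simp only [symJ, symDx, symH, hψ1, habs, hsgn]
    push_cast
    field_simp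
    ring
  · have habs : |(n : ℝ)| = -(n : ℝ) := abs_of_neg (by exact_mod_cast hn1)
    have hsgn : Int.sign m = -1 := Int.sign_eq_neg_one_iff_neg.mpr hm1
    simp only [symJ, symDx, symH, hψ1, habs, hsgn]
    push_cast
    field_simp
    ring

lemma normK_le (ψ : ℝ → ℝ) (hψ : IsCutoff ψ) (n m : ℤ) :
    ‖(symJ ψ n * symDx n + symH m) * symDx (n - m) * symDx m‖ ≤
      3 * (1 + (((n - m : ℤ)) : ℝ) ^ 2) := by
  by_cases hbig : (n - m).natAbs + 2 ≤ m.natAbs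
  · have hc : symJ ψ n * symDx n + symH m = 0 := by
      apply symbol_cancel ψ hψ
      · omega
      · rw [Int.abs_eq_natAbs]; omega
    rw [hc, zero_mul, zero_mul, norm_zero]
    positivity
  · have h1 : ‖symJ ψ n * symDx n‖ ≤ 1 := by
      rw [norm_mul, norm_symDx]
      by_cases hn0 : (n : ℝ) = 0
      · simp [hn0]
      · have he : ‖symJ ψ n‖ = |ψ (n : ℝ)| / |(n : ℝ)| := by
          simp [symJ, abs_div]
        rw [he, div_mul_cancel₀ _ (abs_ne_zero.mpr hn0),
          _root_.abs_of_nonneg (hψ.2.1 _)]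
        exact hψ.2.2.1 _
    have h2 := norm_symH_le m
    have hmn : |(m : ℝ)| ≤ |((n - m : ℤ) : ℝ)| + 1 := by
      have hz : |m| ≤ |n - m| + 1 := by
        rw [Int.abs_eq_natAbs, Int.abs_eq_natAbs]; omega
      calc |(m : ℝ)| = ((|m| : ℤ) : ℝ) := by rw [Int.cast_abs]
        _ ≤ ((|n - m| + 1 : ℤ) : ℝ) := by exact_mod_cast hz
        _ = |((n - m : ℤ) : ℝ)| + 1 := by push_cast [Int.cast_abs]; ring
    have hA2 : ‖symJ ψ n * symDx n + symH m‖ ≤ 2 :=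
      le_trans (norm_add_le _ _) (by linarith)
    rw [norm_mul, norm_mul, norm_symDx, norm_symDx]
    have hx0 : (0 : ℝ) ≤ |((n - m : ℤ) : ℝ)| := abs_nonneg _
    have hm0 : (0 : ℝ) ≤ |(m : ℝ)| := abs_nonneg _
    have hstep : ‖symJ ψ n * symDx n + symH m‖ * |((n - m : ℤ) : ℝ)| * |(m : ℝ)| ≤
        2 * |((n - m : ℤ) : ℝ)| * |(m : ℝ)| := by
      have := mul_le_mul_of_nonneg_right (mul_le_mul_of_nonneg_right hA2 hx0) hm0
      linarith
    refine hstep.trans ?_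
    have hsq : |((n - m : ℤ) : ℝ)| ^ 2 = (((n - m : ℤ)) : ℝ) ^ 2 := sq_abs _
    nlinarith [sq_nonneg (|((n - m : ℤ) : ℝ)| - 1), sq_nonneg (|((n - m : ℤ) : ℝ)| + 1)]

lemma tsum_cs {f g : ℤ → ℝ} (hf0 : ∀ i, 0 ≤ f i) (hg0 : ∀ i, 0 ≤ g i)
    (hf : Summable f) (hfg2 : Summable fun i => f i * g i ^ 2) :
    (∑' i, f i * g i) ^ 2 ≤ (∑' i, f i) * ∑' i, f i * g i ^ 2 := by
  have hprod : Summable fun i => f i * g i := by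
    apply Summable.of_nonneg_of_le (fun i => mul_nonneg (hf0 i) (hg0 i))
      (fun i => ?_) ((hf.add hfg2).mul_left (1 / 2))
    nlinarith [mul_nonneg (hf0 i) (sq_nonneg (1 - g i))]
  have key : ∑' i, f i * g i ≤
      Real.sqrt (∑' i, f i) * Real.sqrt (∑' i, f i * g i ^ 2) := by
    apply Summable.tsum_le_of_sum_le hprod
    intro s
    have h1 : ∑ i ∈ s, f i * g i =
        ∑ i ∈ s, Real.sqrt (f i) * (Real.sqrt (f i) * g i) := by
      refine Finset.sum_congr rfl fun i _ => ?_
      rw [← mul_assoc, Real.mul_self_sqrt (hf0 i)]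
    rw [h1]
    refine le_trans (Real.sum_mul_le_sqrt_mul_sqrt s _ _) ?_
    have e1 : ∑ i ∈ s, Real.sqrt (f i) ^ 2 = ∑ i ∈ s, f i :=
      Finset.sum_congr rfl fun i _ => Real.sq_sqrt (hf0 i)
    have e2 : ∑ i ∈ s, (Real.sqrt (f i) * g i) ^ 2 = ∑ i ∈ s, f i * g i ^ 2 :=
      Finset.sum_congr rfl fun i _ => by rw [mul_pow, Real.sq_sqrt (hf0 i)]
    rw [e1, e2]
    have hb1 : ∑ i ∈ s, f i ≤ ∑' i, f i := Summable.sum_le_tsum s (fun i _ => hf0 i) hf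
    have hb2 : ∑ i ∈ s, f i * g i ^ 2 ≤ ∑' i, f i * g i ^ 2 :=
      Summable.sum_le_tsum s (fun i _ => mul_nonneg (hf0 i) (sq_nonneg _)) hfg2
    exact mul_le_mul (Real.sqrt_le_sqrt hb1) (Real.sqrt_le_sqrt hb2)
      (Real.sqrt_nonneg _) (Real.sqrt_nonneg _)
  calc (∑' i, f i * g i) ^ 2
      ≤ (Real.sqrt (∑' i, f i) * Real.sqrt (∑' i, f i * g i ^ 2)) ^ 2 := by
        apply pow_le_pow_left₀ (tsum_nonneg fun i => mul_nonneg (hf0 i) (hg0 i)) key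
    _ = (∑' i, f i) * ∑' i, f i * g i ^ 2 := by
        rw [mul_pow, Real.sq_sqrt (tsum_nonneg hf0),
          Real.sq_sqrt (tsum_nonneg fun i => mul_nonneg (hf0 i) (sq_nonneg _))]

end Statement11Aux


open Statement11Aux in
set_option maxHeartbeats 1000000 in
/-- `‖J∂ₓ(∂ₓu ∂ₓv) + ∂ₓu H∂ₓv‖_{L²} ≤ C‖u‖_{H^{s₀}}‖v‖_{L²}`
(the left-hand side described through its Fourier coefficients). -/
theorem statement11 (s₀ : ℝ) (hs₀ : 5 / 2 < s₀) (ψ : ℝ → ℝ) (hψ : IsCutoff ψ) :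
    ∃ C > (0 : ℝ), ∀ u v G : Torus → ℝ,
      Continuous u → MemHs s₀ u →
      MemLp v 2 haarAddCircle → MemHs 0 v →
      (∀ n : ℤ, FC G n =
        ∑' m : ℤ, (symJ ψ n * symDx n + symH m) * symDx (n - m) * symDx m
          * FC u (n - m) * FC v m) →
      HsNorm 0 G ≤ C * HsNorm s₀ u * HsNorm 0 v := by
  -- summability of the weight (1+k²)^{2-s₀}
  have hexp : (1 : ℝ) < 2 * (s₀ - 2) := by linarith
  have hSsum : Summable (fun k : ℤ => (1 + (k : ℝ) ^ 2) ^ (2 - s₀)) := by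
    have h1 : Summable (fun k : ℤ => |(k : ℝ)| ^ (-(2 * (s₀ - 2)))) :=
      Real.summable_abs_int_rpow hexp
    have h2 : Summable (fun k : ℤ =>
        |(k : ℝ)| ^ (-(2 * (s₀ - 2))) + if k = (0 : ℤ) then (1 : ℝ) else 0) :=
      h1.add (hasSum_ite_eq (0 : ℤ) (1 : ℝ)).summable
    apply h2.of_nonneg_of_le (fun k => by positivity)
    intro k
    by_cases hk : k = 0
    · subst hk
      have : ((0:ℝ)) ^ (-(2 * (s₀ - 2))) = 0 := Real.zero_rpow (by linarith)
      simp [this]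
    · have hk0 : (0 : ℝ) < (k : ℝ) ^ 2 := by
        have : (k : ℝ) ≠ 0 := Int.cast_ne_zero.mpr hk
        positivity
    
      have hle : (1 + (k : ℝ) ^ 2) ^ (2 - s₀) ≤ ((k : ℝ) ^ 2) ^ (2 - s₀) :=
        Real.rpow_le_rpow_of_nonpos hk0 (by linarith) (by linarith)
      have heq : ((k : ℝ) ^ 2) ^ (2 - s₀) = |(k : ℝ)| ^ (-(2 * (s₀ - 2))) := by
        rw [← _root_.sq_abs, ← Real.rpow_natCast |(k : ℝ)| 2, ← Real.rpow_mul (abs_nonneg _),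
          show ((2:ℕ):ℝ) * (2 - s₀) = -(2*(s₀-2)) from by push_cast; ring]
      simp only [hk, if_false, add_zero]
      rw [← heq]; exact hle
  set S := ∑' k : ℤ, (1 + (k : ℝ) ^ 2) ^ (2 - s₀) with hSdef
  have hS0 : 0 ≤ S := tsum_nonneg fun k => by positivity
  refine ⟨3 * Real.sqrt S + 1, by positivity, ?_⟩
  intro u v G _hc hu _hv2 hv hG
  have hu' : Summable (fun k : ℤ => (1 + (k : ℝ) ^ 2) ^ s₀ * ‖FC u k‖ ^ 2) := hu
  have hb2 : Summable (fun m : ℤ => ‖FC v m‖ ^ 2) := by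
    have : Summable (fun m : ℤ => (1 + (m : ℝ) ^ 2) ^ (0:ℝ) * ‖FC v m‖ ^ 2) := hv
    simpa using this
  set a : ℤ → ℝ := fun k => ‖FC u k‖ with hadef
  set b : ℤ → ℝ := fun m => ‖FC v m‖ with hbdef
  set w : ℤ → ℝ := fun k => 3 * (1 + (k : ℝ) ^ 2) * a k with hwdef
  have hw0 : ∀ k, 0 ≤ w k := fun k =>
    mul_nonneg (by positivity) (norm_nonneg _)
  have hpos : ∀ k : ℤ, (0 : ℝ) < 1 + (k : ℝ) ^ 2 := fun k => by positivity
  have hsq1 : ∀ k : ℤ, ((1 + (k : ℝ) ^ 2) ^ ((2 - s₀) / 2)) ^ 2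
      = (1 + (k : ℝ) ^ 2) ^ (2 - s₀) := by
    intro k
    rw [← Real.rpow_natCast ((1 + (k : ℝ) ^ 2) ^ ((2 - s₀) / 2)) 2,
      ← Real.rpow_mul (hpos k).le]
    norm_num
  have hsq2 : ∀ k : ℤ, ((1 + (k : ℝ) ^ 2) ^ (s₀ / 2)) ^ 2
      = (1 + (k : ℝ) ^ 2) ^ s₀ := by
    intro k
    rw [← Real.rpow_natCast ((1 + (k : ℝ) ^ 2) ^ (s₀ / 2)) 2,
      ← Real.rpow_mul (hpos k).le]
    norm_num
  have hmulxy : ∀ k : ℤ, (1 + (k : ℝ) ^ 2) ^ ((2 - s₀) / 2) * (1 + (k : ℝ) ^ 2) ^ (s₀ / 2)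
      = 1 + (k : ℝ) ^ 2 := by
    intro k
    rw [← Real.rpow_add (hpos k), show (2 - s₀) / 2 + s₀ / 2 = 1 by ring, Real.rpow_one]
  -- summability of w
  have hw_le : ∀ k : ℤ, w k ≤ (3 / 2) *
      ((1 + (k : ℝ) ^ 2) ^ (2 - s₀) + (1 + (k : ℝ) ^ 2) ^ s₀ * a k ^ 2) := by
    intro k
    have hXY : (1 + (k : ℝ) ^ 2) ^ ((2 - s₀) / 2) * ((1 + (k : ℝ) ^ 2) ^ (s₀ / 2) * a k)
        = (1 + (k : ℝ) ^ 2) * a k := by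
      linear_combination a k * hmulxy k
    have hY2 : ((1 + (k : ℝ) ^ 2) ^ (s₀ / 2) * a k) ^ 2
        = (1 + (k : ℝ) ^ 2) ^ s₀ * a k ^ 2 := by rw [mul_pow, hsq2 k]
    have hw_eq : w k = 3 * ((1 + (k : ℝ) ^ 2) * a k) := by simp only [hwdef]; ring
    nlinarith [sq_nonneg ((1 + (k : ℝ) ^ 2) ^ ((2 - s₀) / 2)
      - (1 + (k : ℝ) ^ 2) ^ (s₀ / 2) * a k), hsq1 k]
  have hw_sum : Summable w :=
    Summable.of_nonneg_of_le hw0 hw_le ((hSsum.add hu').mul_left (3 / 2))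
  set A := ∑' k, w k with hAdef
  have hA0 : 0 ≤ A := tsum_nonneg hw0
  set T := ∑' k : ℤ, (1 + (k : ℝ) ^ 2) ^ s₀ * a k ^ 2 with hTdef
  have hT0 : 0 ≤ T := tsum_nonneg fun k => mul_nonneg (Real.rpow_nonneg (hpos k).le _) (sq_nonneg _)
  have hUT : HsNorm s₀ u = Real.sqrt T := rfl
  -- A ≤ 3 √S √T
  have hA_le : A ≤ 3 * (Real.sqrt S * Real.sqrt T) := by
    apply Summable.tsum_le_of_sum_le hw_sum
    intro s
    have hrw : ∑ k ∈ s, w k = 3 * ∑ k ∈ s,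
        (1 + (k : ℝ) ^ 2) ^ ((2 - s₀) / 2) * ((1 + (k : ℝ) ^ 2) ^ (s₀ / 2) * a k) := by
      rw [Finset.mul_sum]
      refine Finset.sum_congr rfl fun k _ => ?_
      simp only [hwdef]
      linear_combination (-3 : ℝ) * a k * hmulxy k
    rw [hrw]
    have hCS := Real.sum_mul_le_sqrt_mul_sqrt s
      (fun k => (1 + (k : ℝ) ^ 2) ^ ((2 - s₀) / 2))
      (fun k => (1 + (k : ℝ) ^ 2) ^ (s₀ / 2) * a k)
    have h1 : ∑ k ∈ s, ((1 + (k : ℝ) ^ 2) ^ ((2 - s₀) / 2)) ^ 2 ≤ S := by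
      rw [Finset.sum_congr rfl fun k _ => hsq1 k]
      exact Summable.sum_le_tsum s (fun k _ => Real.rpow_nonneg (hpos k).le _) hSsum
    have h2 : ∑ k ∈ s, ((1 + (k : ℝ) ^ 2) ^ (s₀ / 2) * a k) ^ 2 ≤ T := by
      rw [Finset.sum_congr rfl fun k _ => by
        rw [mul_pow, hsq2 k]]
      exact Summable.sum_le_tsum s
        (fun k _ => mul_nonneg (Real.rpow_nonneg (hpos k).le _) (sq_nonneg _)) hu'
    calc 3 * ∑ k ∈ s, (1 + (k : ℝ) ^ 2) ^ ((2 - s₀) / 2) * ((1 + (k : ℝ) ^ 2) ^ (s₀ / 2) * a k)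
        ≤ 3 * (Real.sqrt (∑ k ∈ s, ((1 + (k : ℝ) ^ 2) ^ ((2 - s₀) / 2)) ^ 2) *
            Real.sqrt (∑ k ∈ s, ((1 + (k : ℝ) ^ 2) ^ (s₀ / 2) * a k) ^ 2)) := by
          linarith [hCS]
      _ ≤ 3 * (Real.sqrt S * Real.sqrt T) := by
          have := mul_le_mul (Real.sqrt_le_sqrt h1) (Real.sqrt_le_sqrt h2)
            (Real.sqrt_nonneg _) (Real.sqrt_nonneg _)
          linarith
  -- the L² data of v
  set Bv := ∑' m, b m ^ 2 with hBvdef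
  have hBv0 : 0 ≤ Bv := tsum_nonneg fun m => sq_nonneg _
  have hVB : HsNorm 0 v = Real.sqrt Bv := by
    unfold HsNorm
    congr 1
    exact tsum_congr fun n => by rw [Real.rpow_zero, one_mul]
  have hbV : ∀ m, b m ≤ Real.sqrt Bv := by
    intro m
    rw [show b m = Real.sqrt (b m ^ 2) from (Real.sqrt_sq (norm_nonneg _)).symm]
    exact Real.sqrt_le_sqrt (Summable.le_tsum hb2 m fun j _ => sq_nonneg _)
  -- per-frequency bounds
  have hwA : ∀ k, w k ≤ A := fun k => Summable.le_tsum hw_sum k fun j _ => hw0 j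
  set σ : ℤ → ℝ := fun n => ∑' m, w (n - m) * b m ^ 2 with hσdef
  have hσ0 : ∀ n, 0 ≤ σ n := fun n =>
    tsum_nonneg fun m => mul_nonneg (hw0 _) (sq_nonneg _)
  have hFn2 : ∀ n : ℤ, ‖FC G n‖ ^ 2 ≤ A * σ n := by
    intro n
    have hinj : Function.Injective (fun m : ℤ => n - m) := by
      intro x y h
      simpa using h
    have hwn : Summable (fun m : ℤ => w (n - m)) := hw_sum.comp_injective hinj
    have hσn : Summable (fun m : ℤ => w (n - m) * b m ^ 2) :=
      Summable.of_nonneg_of_le (fun m => mul_nonneg (hw0 _) (sq_nonneg _))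
        (fun m => mul_le_mul_of_nonneg_right (hwA _) (sq_nonneg _))
        (hb2.mul_left A)
    have hsum_wb : Summable (fun m : ℤ => w (n - m) * b m) :=
      Summable.of_nonneg_of_le (fun m => mul_nonneg (hw0 _) (norm_nonneg _))
        (fun m => mul_le_mul_of_nonneg_left (hbV m) (hw0 _))
        (hwn.mul_right (Real.sqrt Bv))
    have hterm : ∀ m : ℤ,
        ‖(symJ ψ n * symDx n + symH m) * symDx (n - m) * symDx m
          * FC u (n - m) * FC v m‖ ≤ w (n - m) * b m := by
      intro m
      rw [norm_mul, norm_mul]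
      have h1 := normK_le ψ hψ n m
      have : ‖(symJ ψ n * symDx n + symH m) * symDx (n - m) * symDx m‖
          * ‖FC u (n - m)‖ * ‖FC v m‖
          ≤ (3 * (1 + (((n - m : ℤ)) : ℝ) ^ 2)) * ‖FC u (n - m)‖ * ‖FC v m‖ := by
        have := mul_le_mul_of_nonneg_right
          (mul_le_mul_of_nonneg_right h1 (norm_nonneg (FC u (n - m)))) (norm_nonneg (FC v m))
        linarith
      calc ‖(symJ ψ n * symDx n + symH m) * symDx (n - m) * symDx m‖
            * ‖FC u (n - m)‖ * ‖FC v m‖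
          ≤ (3 * (1 + (((n - m : ℤ)) : ℝ) ^ 2)) * ‖FC u (n - m)‖ * ‖FC v m‖ := this
        _ = w (n - m) * b m := by simp only [hwdef, hbdef]; try ring
    have hterm_sum : Summable (fun m : ℤ =>
        ‖(symJ ψ n * symDx n + symH m) * symDx (n - m) * symDx m
          * FC u (n - m) * FC v m‖) :=
      Summable.of_nonneg_of_le (fun m => norm_nonneg _) hterm hsum_wb
    have hFn : ‖FC G n‖ ≤ ∑' m, w (n - m) * b m := by
      rw [hG n]
      exact (norm_tsum_le_tsum_norm hterm_sum).trans
        (Summable.tsum_le_tsum hterm hterm_sum hsum_wb)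
    have hcs := tsum_cs (f := fun m => w (n - m)) (g := b)
      (fun m => hw0 _) (fun m => norm_nonneg _) hwn hσn
    have hAn : ∑' m, w (n - m) = A := by
      simpa using (Equiv.subLeft n).tsum_eq w
    calc ‖FC G n‖ ^ 2 ≤ (∑' m, w (n - m) * b m) ^ 2 := by
          apply pow_le_pow_left₀ (norm_nonneg _) hFn
      _ ≤ (∑' m, w (n - m)) * ∑' m, w (n - m) * b m ^ 2 := hcs
      _ = A * σ n := by rw [hAn]
  -- sum over n via Fubini
  have hQ : Summable (fun p : ℤ × ℤ => w p.1 * b p.2 ^ 2) :=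
    hw_sum.mul_of_nonneg hb2 hw0 (fun m => sq_nonneg _)
  let e : ℤ × ℤ ≃ ℤ × ℤ :=
    { toFun := fun p => (p.1 - p.2, p.2)
      invFun := fun p => (p.1 + p.2, p.2)
      left_inv := fun p => by simp
      right_inv := fun p => by simp }
  have hP : Summable (fun p : ℤ × ℤ => w (p.1 - p.2) * b p.2 ^ 2) :=
    (hQ.comp_injective e.injective).congr fun p => rfl
  have hfib : HasSum σ (∑' p : ℤ × ℤ, w (p.1 - p.2) * b p.2 ^ 2) :=
    hP.hasSum.prod_fiberwise fun n => (hP.prod_factor n).hasSum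
  have hσ_sum : Summable σ := hfib.summable
  have hSigma : ∑' n, σ n = A * Bv := by
    rw [hfib.tsum_eq]
    calc ∑' p : ℤ × ℤ, w (p.1 - p.2) * b p.2 ^ 2
        = ∑' p : ℤ × ℤ, w p.1 * b p.2 ^ 2 := e.tsum_eq (fun p : ℤ × ℤ => w p.1 * b p.2 ^ 2)
      _ = ∑' k, ∑' m, w k * b m ^ 2 := Summable.tsum_prod' hQ fun k => (hQ.prod_factor k)
      _ = ∑' k, w k * Bv := tsum_congr fun k => tsum_mul_left
      _ = A * Bv := tsum_mul_right
  -- conclusion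
  have hGnorm : HsNorm 0 G = Real.sqrt (∑' n, ‖FC G n‖ ^ 2) := by
    unfold HsNorm
    congr 1
    exact tsum_congr fun n => by rw [Real.rpow_zero, one_mul]
  have hGsum_le : ∑' n, ‖FC G n‖ ^ 2 ≤ A * (A * Bv) := by
    apply tsum_le_of_sum_le' (mul_nonneg hA0 (mul_nonneg hA0 hBv0))
    intro s
    calc ∑ n ∈ s, ‖FC G n‖ ^ 2 ≤ ∑ n ∈ s, A * σ n :=
          Finset.sum_le_sum fun n _ => hFn2 n
      _ = A * ∑ n ∈ s, σ n := (Finset.mul_sum _ _ _).symm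
      _ ≤ A * (A * Bv) := by
          have hss := Summable.sum_le_tsum s (fun n _ => hσ0 n) hσ_sum
          exact mul_le_mul_of_nonneg_left (hss.trans_eq hSigma) hA0
  rw [hGnorm, hUT, hVB]
  set A' := 3 * (Real.sqrt S * Real.sqrt T) with hA'def
  have hA'0 : 0 ≤ A' := by positivity
  calc Real.sqrt (∑' n, ‖FC G n‖ ^ 2)
      ≤ Real.sqrt (A' ^ 2 * Bv) := by
        apply Real.sqrt_le_sqrt
        nlinarith [hGsum_le, mul_le_mul hA_le hA_le hA0 hA'0, hBv0]
    _ = A' * Real.sqrt Bv := by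
        rw [Real.sqrt_mul (sq_nonneg A'), Real.sqrt_sq hA'0]
    _ ≤ (3 * Real.sqrt S + 1) * Real.sqrt T * Real.sqrt Bv := by
        have hT' : (0:ℝ) ≤ Real.sqrt T := Real.sqrt_nonneg _
        have hB' : (0:ℝ) ≤ Real.sqrt Bv := Real.sqrt_nonneg _
        nlinarith [mul_nonneg hT' hB']

end
end

section
/- Let s₀ > 1/2 and let Λ = D² or D∂_x. There exists C(s₀) > 0 such that for all f ∈ H^{s₀+1}(𝕋) and g ∈ L²(𝕋): ‖[⟨D⟩^{-1}Λ, f] g‖_{L²} ≤ C‖f‖_{H^{s₀+1}}‖g‖_{L²}, where ⟨D⟩^{-1} has symbol (1+ξ²)^{-1/2} and D has symbol |ξ|. -/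
open MeasureTheory Real Complex AddCircle
open scoped BigOperators ENNReal

noncomputable section

section auxx

lemma sqrt_lip (x y : ℝ) : |Real.sqrt (1+x^2) - Real.sqrt (1+y^2)| ≤ |x - y| := by
  set u := Real.sqrt (1+x^2) with hu
  set v := Real.sqrt (1+y^2) with hv
  have hu2 : u^2 = 1 + x^2 := Real.sq_sqrt (by positivity)
  have hv2 : v^2 = 1 + y^2 := Real.sq_sqrt (by positivity)
  have hux : |x| ≤ u := by
    rw [hu]; rw [← Real.sqrt_sq_eq_abs]; exact Real.sqrt_le_sqrt (by nlinarith)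
  have hvy : |y| ≤ v := by
    rw [hv]; rw [← Real.sqrt_sq_eq_abs]; exact Real.sqrt_le_sqrt (by nlinarith)
  have huv : 1 + x*y ≤ u * v := by
    have h0 : 0 ≤ u := Real.sqrt_nonneg _
    have h1 : 0 ≤ v := Real.sqrt_nonneg _
    have : |1 + x*y| ≤ u * v := by
      rw [← Real.sqrt_sq_eq_abs, hu, hv, ← Real.sqrt_mul (by positivity)]
      exact Real.sqrt_le_sqrt (by nlinarith [sq_nonneg (x - y)])
    calc 1 + x*y ≤ |1 + x*y| := le_abs_self _
      _ ≤ u * v := this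
  have hsq : (u - v)^2 ≤ (x - y)^2 := by nlinarith
  calc |u - v| = Real.sqrt ((u-v)^2) := (Real.sqrt_sq_eq_abs _).symm
    _ ≤ Real.sqrt ((x-y)^2) := Real.sqrt_le_sqrt hsq
    _ = |x - y| := Real.sqrt_sq_eq_abs _

lemma b_eq (x : ℝ) : x^2 / Real.sqrt (1+x^2) = Real.sqrt (1+x^2) - 1 / Real.sqrt (1+x^2) := by
  have h : Real.sqrt (1+x^2) > 0 := Real.sqrt_pos.2 (by positivity)
  have h2 : Real.sqrt (1+x^2) ^ 2 = 1 + x^2 := Real.sq_sqrt (by positivity)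
  field_simp
  linarith

lemma one_le_sqrt (x : ℝ) : 1 ≤ Real.sqrt (1+x^2) := by
  nlinarith [Real.sq_sqrt (show (0:ℝ) ≤ 1+x^2 by positivity), Real.sqrt_nonneg (1+x^2)]

lemma b_lip (x y : ℝ) : |x^2 / Real.sqrt (1+x^2) - y^2 / Real.sqrt (1+y^2)| ≤ 2 * |x - y| := by
  rw [b_eq, b_eq]
  have hx := one_le_sqrt x
  have hy := one_le_sqrt y
  have h1 : |1 / Real.sqrt (1+x^2) - 1 / Real.sqrt (1+y^2)| ≤ |x - y| := by
    rw [div_sub_div _ _ (by positivity) (by positivity)]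
    rw [abs_div]
    have hnum : |1 * Real.sqrt (1+y^2) - Real.sqrt (1+x^2) * 1| ≤ |x - y| := by
      rw [one_mul, mul_one, abs_sub_comm]
      exact sqrt_lip x y
    have hden : (1:ℝ) ≤ |Real.sqrt (1+x^2) * Real.sqrt (1+y^2)| := by
      rw [_root_.abs_of_pos (by positivity)]
      nlinarith
    calc |1 * Real.sqrt (1+y^2) - Real.sqrt (1+x^2) * 1| / |Real.sqrt (1+x^2) * Real.sqrt (1+y^2)|
        ≤ |1 * Real.sqrt (1+y^2) - Real.sqrt (1+x^2) * 1| / 1 :=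
          div_le_div_of_nonneg_left (abs_nonneg _) one_pos hden |>.trans_eq rfl
      _ = _ := div_one _
      _ ≤ |x - y| := hnum
  calc |Real.sqrt (1+x^2) - 1 / Real.sqrt (1+x^2) - (Real.sqrt (1+y^2) - 1 / Real.sqrt (1+y^2))|
      = |(Real.sqrt (1+x^2) - Real.sqrt (1+y^2)) + (1 / Real.sqrt (1+y^2) - 1 / Real.sqrt (1+x^2))| := by ring_nf
    _ ≤ |Real.sqrt (1+x^2) - Real.sqrt (1+y^2)| + |1 / Real.sqrt (1+y^2) - 1 / Real.sqrt (1+x^2)| := abs_add_le _ _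
    _ ≤ |x - y| + |x - y| := by
        refine add_le_add (sqrt_lip x y) ?_
        rw [abs_sub_comm]; exact h1
    _ = 2 * |x - y| := by ring

lemma abs_le_sqrt' (x : ℝ) : |x| ≤ Real.sqrt (1+x^2) := by
  rw [← Real.sqrt_sq_eq_abs]
  exact Real.sqrt_le_sqrt (by nlinarith)

lemma bnd (x : ℝ) : x^2 / Real.sqrt (1+x^2) ≤ |x| := by
  rw [div_le_iff₀ (Real.sqrt_pos.2 (by positivity))]
  nlinarith [abs_le_sqrt' x, abs_nonneg x, _root_.sq_abs x]

lemma s_lip (x y : ℝ) :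
    |x * |x| / Real.sqrt (1+x^2) - y * |y| / Real.sqrt (1+y^2)| ≤ 2 * |x - y| := by
  have hbx := bnd x
  have hby := bnd y
  have hnx : 0 ≤ x^2 / Real.sqrt (1+x^2) := by positivity
  have hny : 0 ≤ y^2 / Real.sqrt (1+y^2) := by positivity
  rcases le_or_gt 0 x with hx | hx <;> rcases le_or_gt 0 y with hy | hy
  · rw [_root_.abs_of_nonneg hx, _root_.abs_of_nonneg hy, ← sq, ← sq]
    exact b_lip x y
  · rw [_root_.abs_of_nonneg hx, _root_.abs_of_neg hy, ← sq]
    have : x * x = x^2 := (sq x).symm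
    have hxy : x - y = |x - y| := (_root_.abs_of_pos (by linarith)).symm
    rw [show y * -y = -(y^2) by ring]
    rw [neg_div, sub_neg_eq_add]
    rw [_root_.abs_of_nonneg (by positivity)]
    rw [_root_.abs_of_nonneg hx] at hbx
    rw [_root_.abs_of_neg hy] at hby
    linarith
  · rw [_root_.abs_of_neg hx, _root_.abs_of_nonneg hy]
    rw [show x * -x = -(x^2) by ring, ← sq, neg_div]
    rw [show -(x^2/Real.sqrt (1+x^2)) - y^2/Real.sqrt (1+y^2)
        = -((x^2/Real.sqrt (1+x^2)) + y^2/Real.sqrt (1+y^2)) by ring]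
    rw [abs_neg, _root_.abs_of_nonneg (by positivity)]
    have hxy : y - x = |x - y| := by rw [abs_sub_comm]; exact (_root_.abs_of_pos (by linarith)).symm
    rw [_root_.abs_of_neg hx] at hbx
    rw [_root_.abs_of_nonneg hy] at hby
    linarith
  · rw [_root_.abs_of_neg hx, _root_.abs_of_neg hy]
    rw [show x * -x = -(x^2) by ring, show y * -y = -(y^2) by ring, neg_div, neg_div]
    rw [show -(x^2/Real.sqrt (1+x^2)) - -(y^2/Real.sqrt (1+y^2))
        = -((x^2/Real.sqrt (1+x^2)) - y^2/Real.sqrt (1+y^2)) by ring]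
    rw [abs_neg]
    exact b_lip x y


lemma symbol_bound (a : ℤ → ℂ)
    (ha : (a = fun n : ℤ => (((n : ℝ) ^ 2 / Real.sqrt (1 + (n : ℝ) ^ 2) : ℝ) : ℂ)) ∨
      (a = fun n : ℤ => ((|(n : ℝ)| / Real.sqrt (1 + (n : ℝ) ^ 2) : ℝ) : ℂ) * symDx n))
    (n m : ℤ) :
    ‖a n - a m‖ ≤ 2 * Real.sqrt (1 + ((n : ℝ) - (m : ℝ)) ^ 2) := by
  have key : ∀ t : ℝ, 2 * |t| ≤ 2 * Real.sqrt (1 + t^2) := fun t => by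
    have := abs_le_sqrt' t; linarith
  rcases ha with ha | ha
  · subst ha
    rw [← Complex.ofReal_sub, Complex.norm_real, Real.norm_eq_abs]
    exact (b_lip _ _).trans (key _)
  · subst ha
    have heq : ∀ k : ℤ, ((|(k : ℝ)| / Real.sqrt (1 + (k : ℝ) ^ 2) : ℝ) : ℂ) * symDx k
        = Complex.I * (((k:ℝ) * |(k:ℝ)| / Real.sqrt (1 + (k:ℝ)^2) : ℝ) : ℂ) := by
      intro k
      simp only [symDx]
      push_cast
      ring
    simp only [heq]
    rw [← mul_sub, norm_mul, Complex.norm_I, one_mul, ← Complex.ofReal_sub,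
      Complex.norm_real, Real.norm_eq_abs]
    exact (s_lip _ _).trans (key _)

lemma mul_le_sq_add_sq (a b : ℝ≥0∞) : a * b ≤ a^2 + b^2 := by
  rcases le_total a b with h | h
  · calc a * b ≤ b * b := mul_le_mul_left h b
      _ = b^2 := (sq b).symm
      _ ≤ a^2 + b^2 := le_add_self
  · calc a * b ≤ a * a := mul_le_mul_right h a
      _ = a^2 := (sq a).symm
      _ ≤ a^2 + b^2 := le_self_add

lemma cs_tsum (p v : ℤ → ℝ≥0∞) :
    (∑' m, p m * v m)^2 ≤ 2 * (∑' m, p m) * (∑' m, p m * v m^2) := by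
  have expand : (∑' m, p m * v m)^2 = ∑' m, ∑' k, (p m * v m) * (p k * v k) := by
    rw [sq, ← ENNReal.tsum_mul_right]
    exact tsum_congr fun m => (ENNReal.tsum_mul_left).symm
  rw [expand]
  have step : ∀ m, ∑' k, (p m * v m) * (p k * v k)
      ≤ ∑' k, (p m * p k * v m^2 + p m * p k * v k^2) := by
    intro m
    refine ENNReal.tsum_le_tsum fun k => ?_
    calc (p m * v m) * (p k * v k) = (p m * p k) * (v m * v k) := by ring
      _ ≤ (p m * p k) * (v m^2 + v k^2) := mul_le_mul_right (mul_le_sq_add_sq _ _) _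
      _ = p m * p k * v m^2 + p m * p k * v k^2 := by ring
  calc ∑' m, ∑' k, (p m * v m) * (p k * v k)
      ≤ ∑' m, ∑' k, (p m * p k * v m^2 + p m * p k * v k^2) := ENNReal.tsum_le_tsum step
    _ = (∑' m, ∑' k, p m * p k * v m^2) + (∑' m, ∑' k, p m * p k * v k^2) := by
        rw [← ENNReal.tsum_add]
        exact tsum_congr fun m => ENNReal.tsum_add
    _ = 2 * (∑' m, p m) * (∑' m, p m * v m^2) := by
        have h1 : (∑' m, ∑' k : ℤ, p m * p k * v m^2) = (∑' m, p m * v m^2) * (∑' k, p k) := by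
          rw [← ENNReal.tsum_mul_right]
          refine tsum_congr fun m => ?_
          rw [← ENNReal.tsum_mul_left]
          exact tsum_congr fun k => by ring
        have h2 : (∑' m, ∑' k : ℤ, p m * p k * v k^2) = (∑' m, p m) * (∑' k, p k * v k^2) := by
          rw [← ENNReal.tsum_mul_right]
          refine tsum_congr fun m => ?_
          rw [← ENNReal.tsum_mul_left]
          exact tsum_congr fun k => by ring
        rw [h1, h2]
        ring

end auxx

/-- commutator estimate `‖[⟨D⟩⁻¹Λ, f]g‖_{L²} ≤ C‖f‖_{H^{s₀+1}}‖g‖_{L²}`,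
with `Λ = D²` or `D∂ₓ` (the commutator described through its Fourier coefficients). -/
theorem statement12 (s₀ : ℝ) (hs₀ : 1 / 2 < s₀) (a : ℤ → ℂ)
    (ha : (a = fun n : ℤ => (((n : ℝ) ^ 2 / Real.sqrt (1 + (n : ℝ) ^ 2) : ℝ) : ℂ)) ∨
      (a = fun n : ℤ => ((|(n : ℝ)| / Real.sqrt (1 + (n : ℝ) ^ 2) : ℝ) : ℂ) * symDx n)) :
    ∃ C > (0 : ℝ), ∀ f g G : Torus → ℝ,
      Continuous f → MemHs (s₀ + 1) f →
      MemLp g 2 haarAddCircle → MemHs 0 g →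
      (∀ n : ℤ, FC G n = ∑' m : ℤ, (a n - a m) * FC f (n - m) * FC g m) →
      HsNorm 0 G ≤ C * HsNorm (s₀ + 1) f * HsNorm 0 g := by
  classical
  -- summability of the weight (1+k²)^{-s₀}
  have hp₀sum : Summable (fun k : ℤ => (1 + (k : ℝ) ^ 2) ^ (-s₀)) := by
    refine Summable.of_norm_bounded_eventually (g := fun k : ℤ => |(k : ℝ)| ^ (-(2 * s₀)))
      (Real.summable_abs_int_rpow (by linarith)) ?_
    rw [Filter.eventually_cofinite]
    refine Set.Finite.subset (Set.finite_singleton (0 : ℤ)) ?_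
    intro k hk
    simp only [Set.mem_setOf_eq, not_le] at hk
    by_contra hk0
    simp only [Set.mem_singleton_iff] at hk0
    apply absurd hk
    push_neg
    have hkr : (0 : ℝ) < (k : ℝ) ^ 2 := by
      have : (k : ℝ) ≠ 0 := Int.cast_ne_zero.2 hk0
      positivity
    have h1 : ‖(1 + (k : ℝ) ^ 2) ^ (-s₀)‖ = (1 + (k : ℝ) ^ 2) ^ (-s₀) := by
      rw [Real.norm_eq_abs, _root_.abs_of_nonneg (Real.rpow_nonneg (by positivity) _)]
    rw [h1]
    have h2 : ((k : ℝ) ^ 2) ^ (-s₀) = |(k : ℝ)| ^ (-(2 * s₀)) := by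
      rw [← _root_.sq_abs, ← Real.rpow_natCast |(k : ℝ)| 2, ← Real.rpow_mul (abs_nonneg _)]
      ring_nf
    rw [← h2, Real.rpow_neg (by positivity), Real.rpow_neg hkr.le]
    have h3 : ((k : ℝ) ^ 2) ^ s₀ ≤ (1 + (k : ℝ) ^ 2) ^ s₀ :=
      Real.rpow_le_rpow hkr.le (by linarith) (by linarith)
    exact inv_anti₀ (Real.rpow_pos_of_pos hkr _) h3
  set p₀ : ℝ := ∑' k : ℤ, (1 + (k : ℝ) ^ 2) ^ (-s₀) with hp₀
  have hp₀pos : 0 < p₀ :=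
    Summable.tsum_pos hp₀sum (fun k => Real.rpow_nonneg (by positivity) _) 0 (by norm_num)
  refine ⟨4 * Real.sqrt p₀, by positivity, ?_⟩
  intro f g G _hfc hf _hg2 hg hGFC
  set hfn := HsNorm (s₀ + 1) f with hhfn
  set hgn := HsNorm 0 g with hhgn
  have hfn0 : 0 ≤ hfn := Real.sqrt_nonneg _
  have hgn0 : 0 ≤ hgn := Real.sqrt_nonneg _
  -- sums as squares of norms
  have hgsum : Summable (fun n : ℤ => ‖FC g n‖ ^ 2) := by
    refine hg.congr fun n => ?_
    rw [Real.rpow_zero, one_mul]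
  have hfsq : (∑' k : ℤ, (1 + (k : ℝ) ^ 2) ^ (s₀ + 1) * ‖FC f k‖ ^ 2) = hfn ^ 2 := by
    rw [hhfn, HsNorm, Real.sq_sqrt]
    exact tsum_nonneg fun k => mul_nonneg (Real.rpow_nonneg (by positivity) _) (sq_nonneg _)
  have hgsq : (∑' n : ℤ, ‖FC g n‖ ^ 2) = hgn ^ 2 := by
    have e : (∑' n : ℤ, ((1 + (n : ℝ) ^ 2) ^ (0 : ℝ)) * ‖FC g n‖ ^ 2)
        = ∑' n : ℤ, ‖FC g n‖ ^ 2 :=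
      tsum_congr fun n => by rw [Real.rpow_zero, one_mul]
    rw [hhgn, HsNorm, e, Real.sq_sqrt (tsum_nonneg fun n => sq_nonneg _)]
  -- ENNReal quantities
  set W : ℤ → ℝ≥0∞ := fun k => ENNReal.ofReal (Real.sqrt (1 + (k : ℝ) ^ 2) * ‖FC f k‖) with hW
  set U : ℤ → ℝ≥0∞ := fun m => ENNReal.ofReal ‖FC g m‖ with hU
  set A : ℝ≥0∞ := ∑' k : ℤ, W k with hA
  -- A² ≤ 2 P F
  have hAsq : A ^ 2 ≤ 2 * ENNReal.ofReal p₀ * ENNReal.ofReal (hfn ^ 2) := by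
    have hPv : ∀ k : ℤ, W k = ENNReal.ofReal ((1 + (k : ℝ) ^ 2) ^ (-s₀)) *
        ENNReal.ofReal ((1 + (k : ℝ) ^ 2) ^ (s₀ + 1 / 2) * ‖FC f k‖) := by
      intro k
      simp only [hW]
      rw [← ENNReal.ofReal_mul (Real.rpow_nonneg (by positivity) _)]
      congr 1
      rw [Real.sqrt_eq_rpow, ← mul_assoc, ← Real.rpow_add (by positivity)]
      norm_num
    have hPv2 : ∀ k : ℤ, ENNReal.ofReal ((1 + (k : ℝ) ^ 2) ^ (-s₀)) *
        (ENNReal.ofReal ((1 + (k : ℝ) ^ 2) ^ (s₀ + 1 / 2) * ‖FC f k‖)) ^ 2 =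
        ENNReal.ofReal ((1 + (k : ℝ) ^ 2) ^ (s₀ + 1) * ‖FC f k‖ ^ 2) := by
      intro k
      have hx : (0:ℝ) < 1 + (k : ℝ) ^ 2 := by positivity
      rw [← ENNReal.ofReal_pow (by positivity), ← ENNReal.ofReal_mul (Real.rpow_nonneg hx.le _)]
      congr 1
      rw [mul_pow, ← Real.rpow_natCast ((1 + (k : ℝ) ^ 2) ^ (s₀ + 1 / 2)) 2,
        ← Real.rpow_mul hx.le, ← mul_assoc, ← Real.rpow_add hx]
      congr 2
      push_cast
      ring
    calc A ^ 2 = (∑' k : ℤ, ENNReal.ofReal ((1 + (k : ℝ) ^ 2) ^ (-s₀)) *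
          ENNReal.ofReal ((1 + (k : ℝ) ^ 2) ^ (s₀ + 1 / 2) * ‖FC f k‖)) ^ 2 := by
          rw [hA]; exact congrArg (fun x => x ^ 2) (tsum_congr hPv)
      _ ≤ 2 * (∑' k : ℤ, ENNReal.ofReal ((1 + (k : ℝ) ^ 2) ^ (-s₀))) *
          (∑' k : ℤ, ENNReal.ofReal ((1 + (k : ℝ) ^ 2) ^ (-s₀)) *
            (ENNReal.ofReal ((1 + (k : ℝ) ^ 2) ^ (s₀ + 1 / 2) * ‖FC f k‖)) ^ 2) := cs_tsum _ _
      _ = 2 * ENNReal.ofReal p₀ * ENNReal.ofReal (hfn ^ 2) := by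
          congr 1
          · congr 1
            rw [hp₀, ENNReal.ofReal_tsum_of_nonneg (fun k => Real.rpow_nonneg (by positivity) _) hp₀sum]
          · rw [← hfsq, ENNReal.ofReal_tsum_of_nonneg
              (fun k => mul_nonneg (Real.rpow_nonneg (by positivity) _) (sq_nonneg _)) hf]
            exact tsum_congr hPv2
  -- pointwise bound on FC G n
  have hGn : ∀ n : ℤ, ENNReal.ofReal ‖FC G n‖ ≤ 2 * ∑' m : ℤ, W (n - m) * U m := by
    intro n
    rw [hGFC n]
    set t : ℤ → ℂ := fun m => (a n - a m) * FC f (n - m) * FC g m with ht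
    have hterm : ∀ m : ℤ, ENNReal.ofReal ‖t m‖ ≤ 2 * (W (n - m) * U m) := by
      intro m
      have h1 : ‖t m‖ ≤ 2 * (Real.sqrt (1 + ((n : ℝ) - (m : ℝ)) ^ 2) * ‖FC f (n - m)‖) * ‖FC g m‖ := by
        rw [ht]
        simp only [norm_mul]
        have hb := symbol_bound a ha n m
        have : ‖a n - a m‖ * ‖FC f (n - m)‖ * ‖FC g m‖ ≤
            (2 * Real.sqrt (1 + ((n : ℝ) - (m : ℝ)) ^ 2)) * ‖FC f (n - m)‖ * ‖FC g m‖ := by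
          gcongr
        linarith [this]
      calc ENNReal.ofReal ‖t m‖
          ≤ ENNReal.ofReal (2 * (Real.sqrt (1 + ((n : ℝ) - (m : ℝ)) ^ 2) * ‖FC f (n - m)‖) * ‖FC g m‖) :=
            ENNReal.ofReal_le_ofReal h1
        _ = 2 * (W (n - m) * U m) := by
            rw [mul_assoc, ENNReal.ofReal_mul (by norm_num), ENNReal.ofReal_mul (by positivity),
              ENNReal.ofReal_ofNat]
            congr 2
            rw [hW]
            congr 2
            push_cast
            ring
    by_cases hsum : Summable t
    · have hnorm : Summable fun m => ‖t m‖ := summable_norm_iff.mpr hsum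
      calc ENNReal.ofReal ‖∑' m, t m‖ ≤ ENNReal.ofReal (∑' m, ‖t m‖) :=
            ENNReal.ofReal_le_ofReal (norm_tsum_le_tsum_norm hnorm)
        _ = ∑' m, ENNReal.ofReal ‖t m‖ :=
            ENNReal.ofReal_tsum_of_nonneg (fun m => norm_nonneg _) hnorm
        _ ≤ ∑' m, 2 * (W (n - m) * U m) := ENNReal.tsum_le_tsum hterm
        _ = 2 * ∑' m, W (n - m) * U m := ENNReal.tsum_mul_left
    · rw [tsum_eq_zero_of_not_summable hsum]
      simp
  -- shift invariance
  have hshiftL : ∀ n : ℤ, (∑' m : ℤ, W (n - m)) = A := by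
    intro n
    rw [hA, ← (Equiv.subLeft n).tsum_eq W]
    rfl
  have hshiftR : ∀ m : ℤ, (∑' n : ℤ, W (n - m)) = A := by
    intro m
    rw [hA, ← (Equiv.subRight m).tsum_eq W]
    rfl
  -- main chain
  set S : ℝ≥0∞ := ∑' n : ℤ, (ENNReal.ofReal ‖FC G n‖) ^ 2 with hS
  have hSbound : S ≤ 16 * ENNReal.ofReal p₀ * ENNReal.ofReal (hfn ^ 2) * ENNReal.ofReal (hgn ^ 2) := by
    have step1 : S ≤ ∑' n : ℤ, (2 * ∑' m : ℤ, W (n - m) * U m) ^ 2 := by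
      refine ENNReal.tsum_le_tsum fun n => ?_
      exact pow_le_pow_left₀ (zero_le (a := ENNReal.ofReal ‖FC G n‖)) (hGn n) 2
    have step2 : ∀ n : ℤ, (2 * ∑' m : ℤ, W (n - m) * U m) ^ 2
        ≤ 8 * A * ∑' m : ℤ, W (n - m) * (U m) ^ 2 := by
      intro n
      rw [mul_pow]
      calc (2 : ℝ≥0∞) ^ 2 * (∑' m : ℤ, W (n - m) * U m) ^ 2
          ≤ 2 ^ 2 * (2 * (∑' m : ℤ, W (n - m)) * ∑' m : ℤ, W (n - m) * (U m) ^ 2) := by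
            gcongr
            exact cs_tsum (fun m => W (n - m)) U
        _ = 8 * A * ∑' m : ℤ, W (n - m) * (U m) ^ 2 := by
            rw [hshiftL n]
            ring
    have step3 : (∑' n : ℤ, ∑' m : ℤ, W (n - m) * (U m) ^ 2) = A * ENNReal.ofReal (hgn ^ 2) := by
      rw [ENNReal.tsum_comm]
      have : ∀ m : ℤ, (∑' n : ℤ, W (n - m) * (U m) ^ 2) = A * (U m) ^ 2 := by
        intro m
        rw [ENNReal.tsum_mul_right, hshiftR m]
      rw [tsum_congr this, ENNReal.tsum_mul_left]
      congr 1
      rw [← hgsq, ENNReal.ofReal_tsum_of_nonneg (fun n => sq_nonneg _) hgsum]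
      refine tsum_congr fun m => ?_
      rw [hU, ← ENNReal.ofReal_pow (norm_nonneg _)]
    calc S ≤ ∑' n : ℤ, (2 * ∑' m : ℤ, W (n - m) * U m) ^ 2 := step1
      _ ≤ ∑' n : ℤ, 8 * A * ∑' m : ℤ, W (n - m) * (U m) ^ 2 := ENNReal.tsum_le_tsum step2
      _ = 8 * A * (∑' n : ℤ, ∑' m : ℤ, W (n - m) * (U m) ^ 2) := ENNReal.tsum_mul_left
      _ = 8 * A * (A * ENNReal.ofReal (hgn ^ 2)) := by rw [step3]
      _ = 8 * A ^ 2 * ENNReal.ofReal (hgn ^ 2) := by ring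
      _ ≤ 8 * (2 * ENNReal.ofReal p₀ * ENNReal.ofReal (hfn ^ 2)) * ENNReal.ofReal (hgn ^ 2) := by
          gcongr
      _ = 16 * ENNReal.ofReal p₀ * ENNReal.ofReal (hfn ^ 2) * ENNReal.ofReal (hgn ^ 2) := by ring
  -- convert to reals
  set M : ℝ := (4 * Real.sqrt p₀ * hfn * hgn) ^ 2 with hM
  have hM0 : 0 ≤ M := sq_nonneg _
  have hMeq : 16 * ENNReal.ofReal p₀ * ENNReal.ofReal (hfn ^ 2) * ENNReal.ofReal (hgn ^ 2)
      = ENNReal.ofReal M := by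
    rw [show ((16 : ℝ≥0∞)) = ENNReal.ofReal 16 by norm_num,
      ← ENNReal.ofReal_mul (by norm_num), ← ENNReal.ofReal_mul (by positivity),
      ← ENNReal.ofReal_mul (by positivity)]
    congr 1
    rw [hM, mul_pow, mul_pow, mul_pow, Real.sq_sqrt hp₀pos.le]
    ring
  have hSM : S ≤ ENNReal.ofReal M := hMeq ▸ hSbound
  have hSeq : S = ∑' n : ℤ, ((‖FC G n‖₊ ^ 2 : NNReal) : ℝ≥0∞) := by
    refine tsum_congr fun n => ?_
    rw [ofReal_norm, enorm_eq_nnnorm, ← ENNReal.coe_pow]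
  have hne : S ≠ ⊤ := (hSM.trans_lt ENNReal.ofReal_lt_top).ne
  have hφ : Summable (fun n : ℤ => (‖FC G n‖₊ ^ 2 : NNReal)) :=
    ENNReal.tsum_coe_ne_top_iff_summable.1 (hSeq ▸ hne)
  have hT : (∑' n : ℤ, ‖FC G n‖ ^ 2) ≤ M := by
    have h1 : S.toReal = ∑' n : ℤ, ‖FC G n‖ ^ 2 := by
      rw [hSeq, ← ENNReal.coe_tsum hφ, ENNReal.coe_toReal, NNReal.coe_tsum]
      push_cast
      rfl
    have h2 : S.toReal ≤ M := by
      have h3 := ENNReal.toReal_mono ENNReal.ofReal_ne_top hSM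
      rwa [ENNReal.toReal_ofReal hM0] at h3
    linarith [h1 ▸ h2]
  have hHs : HsNorm 0 G = Real.sqrt (∑' n : ℤ, ‖FC G n‖ ^ 2) := by
    have e : (∑' n : ℤ, ((1 + (n : ℝ) ^ 2) ^ (0 : ℝ)) * ‖FC G n‖ ^ 2)
        = ∑' n : ℤ, ‖FC G n‖ ^ 2 :=
      tsum_congr fun n => by rw [Real.rpow_zero, one_mul]
    rw [HsNorm, e]
  rw [hHs]
  calc Real.sqrt (∑' n : ℤ, ‖FC G n‖ ^ 2) ≤ Real.sqrt M := Real.sqrt_le_sqrt hT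
    _ = 4 * Real.sqrt p₀ * hfn * hgn := by
        rw [hM, Real.sqrt_sq (by positivity)]


end
end
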